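/- arXiv:2009.03007 — 5 statements merged into one kernel-verified Lean document; each statement's English description precedes it below -/
import Mathlib

section
/- Let (W,S) be a Coxeter system with length function ℓ and let q : S → ℂ. There exists an associative unital ℂ-algebra structure on the free ℂ-module with basis {T_w : w ∈ W} such that T_e is the unit element and, for all s ∈ S and w ∈ W, T_s·T_w = T_{sw} when ℓ(sw) > ℓ(w) and T_s·T_w = (q_s − 1)T_w + q_s T_{sw} when ℓ(sw) < ℓ(w), if and only if q_s = q_{s'} for all s, s' ∈ S that are conjugate in W. Moreover, when such an algebra structure exists, it is unique. -/
/- STATEMENT 0: Let `(W, S)` be a Coxeter system with length function `ℓ` and `q : S → ℂ`.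
There exists an associative unital ℂ-algebra structure on the free ℂ-module with basis
`{T_w : w ∈ W}` such that `T_e` is the unit and, for all `s ∈ S` and `w ∈ W`,
`T_s·T_w = T_{sw}` when `ℓ(sw) > ℓ(w)` and `T_s·T_w = (q_s - 1)T_w + q_s T_{sw}` when
`ℓ(sw) < ℓ(w)`, if and only if `q_s = q_{s'}` for all `s, s' ∈ S` conjugate in `W`.
Moreover such an algebra structure is unique when it exists.

The free ℂ-module with basis `W` is `W →₀ ℂ`, with `T_w = Finsupp.single w 1`, and an
associative unital ℂ-algebra structure on it is encoded by its ℂ-bilinear multiplication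
map. -/

/-- The predicate stating that a ℂ-bilinear multiplication on the free module `W →₀ ℂ` is
an associative unital multiplication with unit `T_e` satisfying the Iwahori–Hecke relations
for the Coxeter system `cs` and the parameters `q`. -/
def IsIwahoriHeckeMul {B W : Type*} [Group W] {M : CoxeterMatrix B} (cs : CoxeterSystem M W)
    (q : B → ℂ) (mul : (W →₀ ℂ) →ₗ[ℂ] (W →₀ ℂ) →ₗ[ℂ] (W →₀ ℂ)) : Prop :=
  (∀ x y z : W →₀ ℂ, mul (mul x y) z = mul x (mul y z)) ∧
  (∀ x : W →₀ ℂ, mul (Finsupp.single 1 1) x = x) ∧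
  (∀ x : W →₀ ℂ, mul x (Finsupp.single 1 1) = x) ∧
  (∀ (i : B) (w : W), cs.length w < cs.length (cs.simple i * w) →
    mul (Finsupp.single (cs.simple i) 1) (Finsupp.single w 1) =
      Finsupp.single (cs.simple i * w) 1) ∧
  (∀ (i : B) (w : W), cs.length (cs.simple i * w) < cs.length w →
    mul (Finsupp.single (cs.simple i) 1) (Finsupp.single w 1) =
      (q i - 1) • Finsupp.single w 1 + q i • Finsupp.single (cs.simple i * w) 1)


open CoxeterSystem List
namespace HeckeStmt0
attribute [local instance] Classical.propDecidable
noncomputable section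
variable {B W : Type*} [Group W] {M : CoxeterMatrix B} (cs : CoxeterSystem M W)


/-- generator of the reflection-sign permutation representation -/
def refPermFun (i : B) : W × ℤˣ → W × ℤˣ :=
  fun p => (cs.simple i * p.1 * cs.simple i, if p.1 = cs.simple i then -p.2 else p.2)

lemma refPermFun_invol (i : B) : Function.Involutive (refPermFun cs i) := by
  rintro ⟨t, ε⟩
  simp only [refPermFun]
  by_cases h : t = cs.simple i
  · simp [h, cs.simple_mul_simple_self]
  · have h2 : cs.simple i * t * cs.simple i ≠ cs.simple i := by
      intro hc
      apply h
      have h1 : cs.simple i * t = 1 := by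
        apply mul_right_cancel (b := cs.simple i)
        rw [hc, one_mul]
      calc t = cs.simple i * (cs.simple i * t) := by
              rw [← mul_assoc, cs.simple_mul_simple_self, one_mul]
        _ = cs.simple i := by rw [h1, mul_one]
    simp only [h, if_false, h2]
    have h3 : cs.simple i * (cs.simple i * t * cs.simple i) * cs.simple i = t := by
      simp only [mul_assoc, cs.simple_mul_simple_self, mul_one,
        cs.simple_mul_simple_cancel_left]
    rw [h3]

/-- the permutation -/
def refPerm (i : B) : Equiv.Perm (W × ℤˣ) := (refPermFun_invol cs i).toPerm

@[simp] lemma refPerm_apply (i : B) (p : W × ℤˣ) :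
    refPerm cs i p = (cs.simple i * p.1 * cs.simple i, if p.1 = cs.simple i then -p.2 else p.2) :=
  rfl

lemma prod_map_refPerm_apply (ω : List B) (t : W) (ε : ℤˣ) :
    ((ω.map (refPerm cs)).prod) (t, ε) =
      (cs.wordProd ω * t * (cs.wordProd ω)⁻¹,
        ε * (-1) ^ ((cs.rightInvSeq ω).count t)) := by
  induction ω generalizing t ε with
  | nil => simp
  | cons i ω ih =>
    rw [List.map_cons, List.prod_cons, Equiv.Perm.mul_apply, ih, refPerm_apply]
    have hris : cs.rightInvSeq (i :: ω) =
        ((cs.wordProd ω)⁻¹ * cs.simple i * cs.wordProd ω) :: cs.rightInvSeq ω := rfl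
    rw [hris, cs.wordProd_cons, List.count_cons]
    have hcond : (cs.wordProd ω * t * (cs.wordProd ω)⁻¹ = cs.simple i)
        ↔ (t = (cs.wordProd ω)⁻¹ * cs.simple i * cs.wordProd ω) := by
      constructor
      · intro h; rw [← h]; group
      · intro h; rw [h]; group
    by_cases h : t = (cs.wordProd ω)⁻¹ * cs.simple i * cs.wordProd ω
    · rw [if_pos (hcond.mpr h)]
      have hbeq : ((cs.wordProd ω)⁻¹ * cs.simple i * cs.wordProd ω == t) = true := by
        simp [h]
      rw [hbeq]
      refine Prod.ext ?_ ?_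
      · show _ = _
        simp only [mul_inv_rev, cs.inv_simple]
        group
      · show -(ε * (-1) ^ count t (cs.rightInvSeq ω)) = _
        rw [if_pos rfl, pow_succ]
        simp [mul_comm]
    · rw [if_neg (fun hc => h (hcond.mp hc))]
      have hbeq : ((cs.wordProd ω)⁻¹ * cs.simple i * cs.wordProd ω == t) = false :=
        beq_eq_false_iff_ne.mpr (fun hc => h hc.symm)
      rw [hbeq]
      refine Prod.ext ?_ ?_
      · show _ = _
        simp only [mul_inv_rev, cs.inv_simple]
        group
      · show ε * (-1) ^ count t (cs.rightInvSeq ω) = _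
        simp


lemma prod_map_alternatingWord {G : Type*} [Monoid G] (g : B → G) (i i' : B) (m : ℕ) :
    ((alternatingWord i i' m).map g).prod
      = (if Even m then 1 else g i') * (g i * g i') ^ (m / 2) := by
  induction m with
  | zero => simp [alternatingWord]
  | succ m ih =>
    rw [alternatingWord_succ', List.map_cons, List.prod_cons, ih]
    by_cases hm : Even m
    · have h1 : ¬ Even (m + 1) := by simp [hm, parity_simps]
      have h2 : (m + 1) / 2 = m / 2 := by
        rw [Nat.even_iff] at hm; omega
      simp [hm, h1, h2]
    · have h1 : Even (m + 1) := by simp [hm, parity_simps]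
      have h2 : (m + 1) / 2 = m / 2 + 1 := by
        rw [Nat.even_iff] at hm; omega
      simp [hm, h1, h2, ← pow_succ', ← mul_assoc]

/-- The `r`-th entry (from appropriate end) of the inversion sequence of an alternating word. -/
def altT (i i' : B) (r : ℕ) : W :=
  (cs.wordProd (alternatingWord i i' r))⁻¹ *
    (if Even r then cs.simple i' else cs.simple i) * cs.wordProd (alternatingWord i i' r)

lemma ris_alternatingWord (i i' : B) (n : ℕ) :
    cs.rightInvSeq (alternatingWord i i' n)
      = (List.range n).map (fun k => altT cs i i' (n - 1 - k)) := by
  induction n with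
  | zero => simp [alternatingWord]
  | succ n ih =>
    rw [alternatingWord_succ']
    have hcons : cs.rightInvSeq ((if Even n then i' else i) :: alternatingWord i i' n)
        = ((cs.wordProd (alternatingWord i i' n))⁻¹ * cs.simple (if Even n then i' else i) *
            cs.wordProd (alternatingWord i i' n)) :: cs.rightInvSeq (alternatingWord i i' n) := rfl
    rw [hcons, ih, List.range_succ_eq_map, List.map_cons, List.map_map]
    congr 1
    · simp only [altT, Nat.add_sub_cancel, Nat.sub_zero, apply_ite cs.simple]
    · apply List.map_congr_left
      intro k hk
      simp only [Function.comp_apply]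
      congr 1
      omega

lemma altT_eq_zpow (i i' : B) (r : ℕ) :
    altT cs i i' r = (cs.simple i * cs.simple i') ^ (-((((r + 1) / 2 : ℕ)) : ℤ)) *
      cs.simple i' * (cs.simple i * cs.simple i') ^ (((r / 2 : ℕ)) : ℤ) := by
  have hπ := cs.prod_alternatingWord_eq_mul_pow i i' r
  rcases Nat.even_or_odd r with he | ho
  · have h2 : (r + 1) / 2 = r / 2 := by rw [Nat.even_iff] at he; omega
    rw [altT, if_pos he, hπ, if_pos he, one_mul, h2]
    simp only [zpow_neg, zpow_natCast]
  · have he : ¬ Even r := Nat.not_even_iff_odd.mpr ho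
    have h2 : (r + 1) / 2 = r / 2 + 1 := by
      rw [Nat.odd_iff] at ho; omega
    rw [altT, if_neg he, hπ, if_neg he, h2]
    rw [mul_inv_rev, cs.inv_simple]
    have hbab : cs.simple i' * cs.simple i * cs.simple i'
        = (cs.simple i * cs.simple i')⁻¹ * cs.simple i' := by
      rw [mul_inv_rev, cs.inv_simple, cs.inv_simple]
    calc ((cs.simple i * cs.simple i') ^ (r / 2))⁻¹ * cs.simple i' * cs.simple i *
          (cs.simple i' * (cs.simple i * cs.simple i') ^ (r / 2))
        = ((cs.simple i * cs.simple i') ^ (r / 2))⁻¹ *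
            (cs.simple i' * cs.simple i * cs.simple i') *
            (cs.simple i * cs.simple i') ^ (r / 2) := by group
      _ = ((cs.simple i * cs.simple i') ^ (r / 2))⁻¹ *
            ((cs.simple i * cs.simple i')⁻¹ * cs.simple i') *
            (cs.simple i * cs.simple i') ^ (r / 2) := by rw [hbab]
      _ = (cs.simple i * cs.simple i') ^ (-(((r / 2 + 1 : ℕ)) : ℤ)) * cs.simple i' *
            (cs.simple i * cs.simple i') ^ (((r / 2 : ℕ)) : ℤ) := by
          rw [show (-(((r / 2 + 1 : ℕ)) : ℤ)) = (-(((r / 2 : ℕ)) : ℤ)) + (-1) by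
            push_cast; ring]
          simp only [zpow_add, zpow_neg, zpow_natCast, zpow_one]
          group

lemma altT_add (i i' : B) {m : ℕ} (hz : (cs.simple i * cs.simple i') ^ m = 1) (r : ℕ) :
    altT cs i i' (r + m) = altT cs i i' r := by
  set z := cs.simple i * cs.simple i' with hzdef
  set b := cs.simple i' with hbdef
  have hzint : z ^ ((m : ℕ) : ℤ) = 1 := by rw [zpow_natCast, hz]
  have hbb : b * b = 1 := cs.simple_mul_simple_self i'
  have hconj : ∀ t : ℤ, b * z ^ t * b = z ^ (-t) := by
    intro t
    have h1 : b * z * b = z⁻¹ := by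
      rw [hzdef, hbdef, mul_inv_rev, cs.inv_simple, cs.inv_simple]
      rw [mul_assoc, mul_assoc, cs.simple_mul_simple_self, mul_one]
    have h2 := map_zpow (MulAut.conj b) z t
    simp only [MulAut.conj_apply] at h2
    have hbinv : b⁻¹ = b := cs.inv_simple i'
    rw [hbinv] at h2
    rw [h2, h1, inv_zpow, zpow_neg]
  have hb : ∀ t : ℤ, b * z ^ t = z ^ (-t) * b := by
    intro t
    calc b * z ^ t = (b * z ^ t * b) * b := by rw [mul_assoc _ b b, hbb, mul_one]
      _ = z ^ (-t) * b := by rw [hconj]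
  rw [altT_eq_zpow, altT_eq_zpow, ← hzdef, ← hbdef]
  rw [mul_assoc, hb, mul_assoc, hb, ← mul_assoc, ← mul_assoc, ← zpow_add, ← zpow_add]
  congr 1
  have harith : (-(((r + m + 1) / 2 : ℕ) : ℤ) + -(((r + m) / 2 : ℕ) : ℤ))
      = (-((((r + 1) / 2 : ℕ)) : ℤ) + -(((r / 2 : ℕ)) : ℤ)) + (-(m : ℤ)) := by
    have e1 : (r + m + 1) / 2 + (r + m) / 2 = r + m := by omega
    have e2 : (r + 1) / 2 + r / 2 = r := by omega
    push_cast
    omega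
  rw [harith, zpow_add, zpow_neg, hzint, inv_one, mul_one]

-- new stuff
lemma refPerm_liftable : M.IsLiftable (refPerm cs) := by
  intro i i'
  set m := M i i' with hm
  have hprod := prod_map_alternatingWord (refPerm cs) i i' (2 * m)
  have heven : Even (2 * m) := even_two_mul m
  have h2 : 2 * m / 2 = m := by omega
  rw [if_pos heven, one_mul, h2] at hprod
  rw [← hprod]
  apply Equiv.ext
  rintro ⟨t, ε⟩
  rw [prod_map_refPerm_apply]
  have hπ : cs.wordProd (alternatingWord i i' (2 * m)) = 1 := by
    rw [cs.prod_alternatingWord_eq_mul_pow, if_pos heven, h2, one_mul,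
      cs.simple_mul_simple_pow]
  rw [hπ]
  have hz : (cs.simple i * cs.simple i') ^ m = 1 := cs.simple_mul_simple_pow i i'
  have hcount : Even ((cs.rightInvSeq (alternatingWord i i' (2 * m))).count t) := by
    rw [ris_alternatingWord]
    have hsplit : (List.range (2 * m)).map (fun k => altT cs i i' (2 * m - 1 - k))
        = ((List.range m).map (fun k => altT cs i i' (m - 1 - k)))
          ++ ((List.range m).map (fun k => altT cs i i' (m - 1 - k))) := by
      rw [two_mul, List.range_add, List.map_append, List.map_map]
      congr 1
      · apply List.map_congr_left
        intro k hk
        rw [List.mem_range] at hk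
        rw [show m + m - 1 - k = (m - 1 - k) + m by omega]
        exact altT_add cs i i' hz (m - 1 - k)
      · apply List.map_congr_left
        intro k hk
        rw [List.mem_range] at hk
        simp only [Function.comp_apply]
        congr 1
        omega
    rw [hsplit, List.count_append]
    exact ⟨_, rfl⟩
  obtain ⟨c, hc⟩ := hcount
  rw [hc]
  have : ((-1 : ℤˣ)) ^ (c + c) = 1 := by
    rw [← two_mul, pow_mul]
    norm_num
  rw [this, mul_one]
  simp

def permRep : W →* Equiv.Perm (W × ℤˣ) := cs.lift ⟨refPerm cs, refPerm_liftable cs⟩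

lemma permRep_simple (i : B) : permRep cs (cs.simple i) = refPerm cs i :=
  cs.lift_apply_simple (refPerm_liftable cs) i

lemma permRep_wordProd (ω : List B) :
    permRep cs (cs.wordProd ω) = ((ω.map (refPerm cs)).prod) := by
  unfold wordProd
  rw [map_list_prod, List.map_map]
  congr 1
  apply List.map_congr_left
  intro i _
  exact permRep_simple cs i

/-- the sign of `t` under `w`. -/
def wsgn (w t : W) : ℤˣ := ((permRep cs w) (t, 1)).2

lemma permRep_apply (w t : W) (ε : ℤˣ) :
    permRep cs w (t, ε) = (w * t * w⁻¹, ε * wsgn cs w t) := by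
  obtain ⟨ω, rfl⟩ := cs.wordProd_surjective w
  rw [permRep_wordProd, prod_map_refPerm_apply]
  unfold wsgn
  rw [permRep_wordProd, prod_map_refPerm_apply]
  simp

lemma wsgn_eq_count (ω : List B) (t : W) :
    wsgn cs (cs.wordProd ω) t = (-1) ^ ((cs.rightInvSeq ω).count t) := by
  unfold wsgn
  rw [permRep_wordProd, prod_map_refPerm_apply]
  simp

lemma wsgn_one (t : W) : wsgn cs 1 t = 1 := by
  unfold wsgn
  simp [map_one]

lemma wsgn_mul (u v t : W) : wsgn cs (u * v) t = wsgn cs v t * wsgn cs u (v * t * v⁻¹) := by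
  have h1 : permRep cs (u * v) (t, 1) = (u * v * t * (u * v)⁻¹, 1 * wsgn cs (u * v) t) :=
    permRep_apply cs (u * v) t 1
  have h2 : permRep cs (u * v) (t, 1)
      = (u * (v * t * v⁻¹) * u⁻¹, (1 * wsgn cs v t) * wsgn cs u (v * t * v⁻¹)) := by
    rw [map_mul, Equiv.Perm.mul_apply, permRep_apply, permRep_apply]
  rw [h1] at h2
  have := congrArg Prod.snd h2
  simpa using this

lemma wsgn_simple (i : B) (t : W) :
    wsgn cs (cs.simple i) t = if t = cs.simple i then -1 else 1 := by
  unfold wsgn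
  rw [permRep_simple, refPerm_apply]

lemma mem_ris_of_wsgn_neg {w t : W} (h : wsgn cs w t = -1) {ω : List B}
    (hω : cs.wordProd ω = w) : t ∈ cs.rightInvSeq ω := by
  subst hω
  rw [wsgn_eq_count] at h
  by_contra hmem
  have : (cs.rightInvSeq ω).count t = 0 := List.count_eq_zero.mpr hmem
  rw [this, pow_zero] at h
  exact absurd h (by decide)

lemma wsgn_refl_self {t : W} (ht : cs.IsReflection t) : wsgn cs t t = -1 := by
  obtain ⟨u, i, rfl⟩ := ht
  set t := u * cs.simple i * u⁻¹ with htdef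
  have hconj : u⁻¹ * t * (u⁻¹)⁻¹ = cs.simple i := by rw [htdef]; group
  have h3 : wsgn cs u⁻¹ t * wsgn cs u (cs.simple i) = 1 := by
    have := wsgn_mul cs u u⁻¹ t
    rw [mul_inv_cancel, wsgn_one] at this
    rw [hconj] at this
    exact this.symm
  have hstep1 : wsgn cs (cs.simple i * u⁻¹) t = wsgn cs u⁻¹ t * (-1) := by
    rw [wsgn_mul cs (cs.simple i) u⁻¹ t, hconj]
    rw [wsgn_simple, if_pos rfl]
  have hstep2 : wsgn cs t t = wsgn cs (cs.simple i * u⁻¹) t * wsgn cs u (cs.simple i) := by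
    have h4 : t = u * (cs.simple i * u⁻¹) := by rw [htdef]; group
    nth_rewrite 1 [h4]
    rw [wsgn_mul cs u (cs.simple i * u⁻¹) t]
    congr 2
    rw [htdef]
    rw [mul_inv_rev, cs.inv_simple, inv_inv]
    group
    rw [cs.simple_mul_simple_self, one_mul]
  rw [hstep2, hstep1]
  calc wsgn cs u⁻¹ t * -1 * wsgn cs u (cs.simple i)
      = -(wsgn cs u⁻¹ t * wsgn cs u (cs.simple i)) := by rw [mul_neg_one, neg_mul]
    _ = -1 := by rw [h3]


lemma wsgn_eq_one_of_length_lt :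
    ∀ n (w t : W), cs.length w = n → cs.IsReflection t →
      cs.length w < cs.length (w * t) → wsgn cs w t = 1 := by
  intro n
  induction n using Nat.strong_induction_on with
  | _ n ih =>
    intro w t hn ht hlt
    rcases eq_or_ne w 1 with rfl | hw
    · exact wsgn_one cs t
    · obtain ⟨i, hi⟩ := cs.exists_rightDescent_of_ne_one hw
      have hi0 : cs.length (w * cs.simple i) < cs.length w := hi
      have hi' : cs.length (w * cs.simple i) + 1 = cs.length w := by
        rcases cs.length_mul_simple w i with h | h
        · omega
        · exact h
      set w' := w * cs.simple i with hw'def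
      have hww' : w = w' * cs.simple i := by
        rw [hw'def, cs.simple_mul_simple_cancel_right]
      by_cases hts : t = cs.simple i
      · exfalso
        rw [hts, ← hw'def] at hlt
        omega
      · set t' := cs.simple i * t * cs.simple i with ht'def
        have ht' : cs.IsReflection t' := by
          have := ht.conj (cs.simple i)
          rwa [cs.inv_simple] at this
        have hsgn : wsgn cs w t = wsgn cs w' t' := by
          nth_rewrite 1 [hww']
          rw [wsgn_mul cs w' (cs.simple i) t, wsgn_simple, if_neg hts, one_mul, cs.inv_simple]
        rw [hsgn]
        have hne : cs.length (w' * t') ≠ cs.length w' := ht'.length_mul_left_ne w'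
        have hwt : w * t = w' * t' * cs.simple i := by
          rw [ht'def, hw'def]
          simp only [mul_assoc, cs.simple_mul_simple_self, mul_one,
            cs.simple_mul_simple_cancel_left]
        have hlow : cs.length (w * t) ≤ cs.length (w' * t') + 1 := by
          rw [hwt]
          have := cs.length_mul_le (w' * t') (cs.simple i)
          rwa [cs.length_simple] at this
        have hgt : cs.length w' < cs.length (w' * t') := by omega
        exact ih (cs.length w') (by omega) w' t' rfl ht' hgt

lemma wsgn_neg_iff {w t : W} (ht : cs.IsReflection t) :
    wsgn cs w t = -1 ↔ cs.length (w * t) < cs.length w := by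
  constructor
  · intro h
    have hne := ht.length_mul_left_ne w
    by_contra hc
    have hgt : cs.length w < cs.length (w * t) := by omega
    rw [wsgn_eq_one_of_length_lt cs (cs.length w) w t rfl ht hgt] at h
    exact absurd h (by decide)
  · intro h
    by_contra hc
    have h1 : wsgn cs w t = 1 := by
      rcases Int.units_eq_one_or (wsgn cs w t) with h1 | h1
      · exact h1
      · exact absurd h1 hc
    have hv : wsgn cs (w * t) t = -1 := by
      rw [wsgn_mul cs w t t,
        show t * t * t⁻¹ = t by rw [ht.mul_self, one_mul, ht.inv],
        wsgn_refl_self cs ht, h1, mul_one]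
    have hne := ht.length_mul_left_ne (w * t)
    have hnot : ¬ (cs.length (w * t) < cs.length (w * t * t)) := by
      intro hgt
      rw [wsgn_eq_one_of_length_lt cs _ (w * t) t rfl ht hgt] at hv
      exact absurd hv (by decide)
    have h3 : cs.length (w * t * t) < cs.length (w * t) := by omega
    rw [show w * t * t = w by rw [mul_assoc, ht.mul_self, mul_one]] at h3
    omega

lemma exists_eraseIdx_of_left_descent {u : W} {i : B}
    (hlt : cs.length (cs.simple i * u) < cs.length u)
    {ω : List B} (hω : cs.wordProd ω = u) :
    ∃ k, k < ω.length ∧ cs.simple i * u = cs.wordProd (ω.eraseIdx k) := by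
  have hrefl : cs.IsReflection (cs.simple i) := cs.isReflection_simple i
  have hlen : cs.length (u⁻¹ * cs.simple i) < cs.length u⁻¹ := by
    have h1 : (u⁻¹ * cs.simple i)⁻¹ = cs.simple i * u := by
      rw [mul_inv_rev, inv_inv, cs.inv_simple]
    have h2 := cs.length_inv (u⁻¹ * cs.simple i)
    rw [h1] at h2
    rw [← h2, cs.length_inv]
    exact hlt
  have hmem : cs.simple i ∈ cs.rightInvSeq (ω.reverse) :=
    mem_ris_of_wsgn_neg cs ((wsgn_neg_iff cs hrefl).mpr hlen)
      (by rw [cs.wordProd_reverse, hω])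
  rw [cs.rightInvSeq_reverse, List.mem_reverse] at hmem
  obtain ⟨k, hk, hkk⟩ := List.getElem_of_mem hmem
  have hk' : k < ω.length := by
    have := cs.length_leftInvSeq ω
    omega
  refine ⟨k, hk', ?_⟩
  have hmul := cs.getD_leftInvSeq_mul_wordProd ω k
  rw [List.getD_eq_getElem _ _ hk, hkk, hω] at hmul
  exact hmul

lemma key_lemma {w : W} {i j : B}
    (h1 : cs.length w < cs.length (cs.simple i * w))
    (h2 : cs.length w < cs.length (w * cs.simple j))
    (h3 : cs.length (cs.simple i * w * cs.simple j) < cs.length (w * cs.simple j)) :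
    cs.simple i * w = w * cs.simple j := by
  obtain ⟨ω, hred, hw⟩ := cs.exists_reduced_word' w
  have hlenω : ω.length = cs.length w := by
    rw [hw]; exact hred.symm
  have hπ : cs.wordProd (ω ++ [j]) = w * cs.simple j := by
    rw [cs.wordProd_append, cs.wordProd_singleton, ← hw]
  have h3' : cs.length (cs.simple i * (w * cs.simple j)) < cs.length (w * cs.simple j) := by
    rwa [← mul_assoc]
  obtain ⟨k, hk, hkey⟩ := exists_eraseIdx_of_left_descent cs h3' hπ
  rw [List.length_append, List.length_singleton] at hk
  rcases Nat.lt_or_ge k ω.length with hkl | hkg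
  · exfalso
    rw [List.eraseIdx_append_of_lt_length hkl, cs.wordProd_append,
      cs.wordProd_singleton] at hkey
    have hsi : cs.simple i * w = cs.wordProd (ω.eraseIdx k) := by
      rw [← mul_assoc] at hkey
      exact mul_right_cancel hkey
    have hlen2 : cs.length (cs.simple i * w) ≤ (ω.eraseIdx k).length := by
      rw [hsi]; exact cs.length_wordProd_le _
    have hel : (ω.eraseIdx k).length + 1 = ω.length := List.length_eraseIdx_add_one hkl
    rcases cs.length_simple_mul w i with ha | ha
    · omega
    · omega
  · have hkeq : k - ω.length = 0 := by omega
    rw [List.eraseIdx_append_of_length_le hkg, hkeq] at hkey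
    simp only [List.eraseIdx, List.append_nil] at hkey
    rw [← hw] at hkey
    calc cs.simple i * w
        = cs.simple i * (w * cs.simple j) * cs.simple j := by
          rw [mul_assoc, mul_assoc, cs.simple_mul_simple_self, mul_one]
      _ = w * cs.simple j := by rw [hkey]

variable (q : B → ℂ)

/-- value of left multiplication operator on a basis vector -/
def lFun (i : B) (w : W) : W →₀ ℂ :=
  if cs.length w < cs.length (cs.simple i * w) then Finsupp.single (cs.simple i * w) 1
  else (q i - 1) • Finsupp.single w 1 + q i • Finsupp.single (cs.simple i * w) 1

/-- value of right multiplication operator on a basis vector -/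
def rFun (j : B) (w : W) : W →₀ ℂ :=
  if cs.length w < cs.length (w * cs.simple j) then Finsupp.single (w * cs.simple j) 1
  else (q j - 1) • Finsupp.single w 1 + q j • Finsupp.single (w * cs.simple j) 1

def Lop (i : B) : (W →₀ ℂ) →ₗ[ℂ] (W →₀ ℂ) := Finsupp.linearCombination ℂ (lFun cs q i)

def Rop (j : B) : (W →₀ ℂ) →ₗ[ℂ] (W →₀ ℂ) := Finsupp.linearCombination ℂ (rFun cs q j)

lemma Lop_single (i : B) (w : W) (c : ℂ) :
    Lop cs q i (Finsupp.single w c) = c • lFun cs q i w := by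
  simp [Lop, Finsupp.linearCombination_single]

lemma Rop_single (j : B) (w : W) (c : ℂ) :
    Rop cs q j (Finsupp.single w c) = c • rFun cs q j w := by
  simp [Rop, Finsupp.linearCombination_single]

lemma Lop_single_inc (i : B) (w : W) (h : cs.length w < cs.length (cs.simple i * w)) :
    Lop cs q i (Finsupp.single w 1) = Finsupp.single (cs.simple i * w) 1 := by
  rw [Lop_single, lFun, if_pos h, one_smul]

lemma Lop_single_dec (i : B) (w : W) (h : ¬ cs.length w < cs.length (cs.simple i * w)) :
    Lop cs q i (Finsupp.single w 1)
      = (q i - 1) • Finsupp.single w 1 + q i • Finsupp.single (cs.simple i * w) 1 := by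
  rw [Lop_single, lFun, if_neg h, one_smul]

lemma Rop_single_inc (j : B) (w : W) (h : cs.length w < cs.length (w * cs.simple j)) :
    Rop cs q j (Finsupp.single w 1) = Finsupp.single (w * cs.simple j) 1 := by
  rw [Rop_single, rFun, if_pos h, one_smul]

lemma Rop_single_dec (j : B) (w : W) (h : ¬ cs.length w < cs.length (w * cs.simple j)) :
    Rop cs q j (Finsupp.single w 1)
      = (q j - 1) • Finsupp.single w 1 + q j • Finsupp.single (w * cs.simple j) 1 := by
  rw [Rop_single, rFun, if_neg h, one_smul]

lemma single_ext {X : Type*} [AddCommMonoid X] [Module ℂ X] {φ ψ : (W →₀ ℂ) →ₗ[ℂ] X}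
    (h : ∀ w : W, φ (Finsupp.single w 1) = ψ (Finsupp.single w 1)) : φ = ψ := by
  apply Finsupp.lhom_ext
  intro a b
  have hb : (Finsupp.single a b : W →₀ ℂ) = b • Finsupp.single a 1 := by
    rw [Finsupp.smul_single, smul_eq_mul, mul_one]
  rw [hb, map_smul, map_smul, h]

lemma LR_comm (hq : ∀ i j : B, IsConj (cs.simple i) (cs.simple j) → q i = q j) (i j : B) :
    (Lop cs q i).comp (Rop cs q j) = (Rop cs q j).comp (Lop cs q i) := by
  apply single_ext
  intro w
  simp only [LinearMap.comp_apply]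
  have hBd := cs.length_simple_mul w i
  have hCd := cs.length_mul_simple w j
  have hD1 := cs.length_mul_simple (cs.simple i * w) j
  have hD2 := cs.length_simple_mul (w * cs.simple j) i
  rw [← mul_assoc] at hD2
  rcases hBd with hB | hB
  · rcases hCd with hC | hC
    · -- both increasing
      rcases hD1 with hD | hD
      · -- ℓ(s i * w * s j) = ℓ w + 2
        rw [Rop_single_inc cs q j w (by omega),
          Lop_single_inc cs q i (w * cs.simple j) (by rw [← mul_assoc]; omega),
          Lop_single_inc cs q i w (by omega),
          Rop_single_inc cs q j (cs.simple i * w) (by omega), mul_assoc]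
      · -- D = A : degenerate case, uses key lemma
        have heq : cs.simple i * w = w * cs.simple j :=
          key_lemma cs (by omega) (by omega) (by omega)
        have hqij : q i = q j := by
          apply hq
          rw [isConj_iff]
          exact ⟨w⁻¹, by rw [inv_inv, mul_assoc, heq, inv_mul_cancel_left]⟩
        rw [Rop_single_inc cs q j w (by omega),
          Lop_single_dec cs q i (w * cs.simple j) (by rw [← mul_assoc]; omega),
          Lop_single_inc cs q i w (by omega),
          Rop_single_dec cs q j (cs.simple i * w) (by omega)]
        rw [← mul_assoc, ← heq, hqij]
    · -- B inc, C dec: D = A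
      have hDA : cs.length (cs.simple i * w * cs.simple j) = cs.length w := by omega
      rw [Rop_single_dec cs q j w (by omega), map_add, map_smul, map_smul,
        Lop_single_inc cs q i w (by omega),
        Lop_single_inc cs q i (w * cs.simple j) (by rw [← mul_assoc]; omega),
        Rop_single_dec cs q j (cs.simple i * w) (by omega), ← mul_assoc]
  · rcases hCd with hC | hC
    · -- B dec, C inc: D = A
      have hDA : cs.length (cs.simple i * w * cs.simple j) = cs.length w := by omega
      rw [Rop_single_inc cs q j w (by omega),
        Lop_single_dec cs q i (w * cs.simple j) (by rw [← mul_assoc]; omega),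
        Lop_single_dec cs q i w (by omega), map_add, map_smul, map_smul,
        Rop_single_inc cs q j w (by omega),
        Rop_single_inc cs q j (cs.simple i * w) (by omega), ← mul_assoc]
    · -- both decreasing
      rcases hD1 with hD | hD
      · -- D = A : degenerate, uses key lemma at s i * w
        have hk : w = cs.simple i * w * cs.simple j := by
          have h5 := key_lemma cs (w := cs.simple i * w) (i := i) (j := j)
            (by rw [cs.simple_mul_simple_cancel_left]; omega) (by omega)
            (by rw [cs.simple_mul_simple_cancel_left]; omega)
          rw [cs.simple_mul_simple_cancel_left] at h5
          exact h5
        have heq : cs.simple i * w = w * cs.simple j := by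
          conv_lhs => rw [hk]
          rw [← mul_assoc, cs.simple_mul_simple_cancel_left]
        have hqij : q i = q j := by
          apply hq
          rw [isConj_iff]
          exact ⟨w⁻¹, by rw [inv_inv, mul_assoc, heq, inv_mul_cancel_left]⟩
        rw [Rop_single_dec cs q j w (by omega), map_add, map_smul, map_smul,
          Lop_single_dec cs q i w (by omega),
          Lop_single_inc cs q i (w * cs.simple j) (by rw [← mul_assoc]; omega),
          map_add, map_smul, map_smul,
          Rop_single_dec cs q j w (by omega),
          Rop_single_inc cs q j (cs.simple i * w) (by omega)]
        rw [← mul_assoc, ← heq, ← hk, hqij]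
      · -- D = A - 2 : all decreasing
        rw [Rop_single_dec cs q j w (by omega), map_add, map_smul, map_smul,
          Lop_single_dec cs q i w (by omega),
          Lop_single_dec cs q i (w * cs.simple j) (by rw [← mul_assoc]; omega),
          map_add, map_smul, map_smul,
          Rop_single_dec cs q j w (by omega),
          Rop_single_dec cs q j (cs.simple i * w) (by omega)]
        rw [← mul_assoc]
        module

/-- the subalgebra of endomorphisms generated by left multiplication operators -/
def hAlg : Subalgebra ℂ (Module.End ℂ (W →₀ ℂ)) := Algebra.adjoin ℂ (Set.range (Lop cs q))

lemma commute_Rop (hq : ∀ i j : B, IsConj (cs.simple i) (cs.simple j) → q i = q j)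
    {a : Module.End ℂ (W →₀ ℂ)} (ha : a ∈ hAlg cs q) (j : B) :
    Commute a (Rop cs q j) := by
  induction ha using Algebra.adjoin_induction with
  | mem x hx =>
    obtain ⟨i, rfl⟩ := hx
    show _ = _
    rw [Module.End.mul_eq_comp, Module.End.mul_eq_comp, LR_comm cs q hq]
  | algebraMap r => exact Algebra.commutes r _
  | add x y hx hy ihx ihy => exact ihx.add_left ihy
  | mul x y hx hy ihx ihy => exact ihx.mul_left ihy

lemma isReduced_of_concat {ω : List B} {j : B} (h : cs.IsReduced (ω ++ [j])) :
    cs.IsReduced ω := by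
  have h1 := cs.length_wordProd_le ω
  have h2 := cs.length_mul_le (cs.wordProd ω) (cs.simple j)
  rw [cs.length_simple] at h2
  have h3 : cs.wordProd (ω ++ [j]) = cs.wordProd ω * cs.simple j := by
    rw [cs.wordProd_append, cs.wordProd_singleton]
  unfold CoxeterSystem.IsReduced at h ⊢
  rw [h3, List.length_append, List.length_singleton] at h
  omega

lemma isReduced_of_cons {ω : List B} {i : B} (h : cs.IsReduced (i :: ω)) :
    cs.IsReduced ω := by
  have := CoxeterSystem.IsReduced.drop h 1
  simpa using this

lemma Rword (ω : List B) (hred : cs.IsReduced ω) :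
    ((ω.reverse.map (Rop cs q)).prod) (Finsupp.single 1 1)
      = Finsupp.single (cs.wordProd ω) 1 := by
  induction ω using List.reverseRecOn with
  | nil => simp
  | append_singleton ω j ih =>
    have hred' : cs.IsReduced ω := isReduced_of_concat cs hred
    have hπ : cs.wordProd (ω ++ [j]) = cs.wordProd ω * cs.simple j := by
      rw [cs.wordProd_append, cs.wordProd_singleton]
    have hlen : cs.length (cs.wordProd ω) < cs.length (cs.wordProd ω * cs.simple j) := by
      have h1 : cs.length (cs.wordProd ω) = ω.length := hred'
      have h2 : cs.length (cs.wordProd ω * cs.simple j) = ω.length + 1 := by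
        rw [← hπ]
        have := hred
        unfold CoxeterSystem.IsReduced at this
        rw [this, List.length_append, List.length_singleton]
      omega
    rw [List.reverse_append, List.reverse_singleton, List.singleton_append, List.map_cons,
      List.prod_cons, Module.End.mul_apply, ih hred', Rop_single_inc cs q j _ hlen, hπ]

lemma Lword (ω : List B) (hred : cs.IsReduced ω) :
    ((ω.map (Lop cs q)).prod) (Finsupp.single 1 1) = Finsupp.single (cs.wordProd ω) 1 := by
  induction ω with
  | nil => simp
  | cons i ω ih =>
    have hred' : cs.IsReduced ω := isReduced_of_cons cs hred
    have hπ : cs.wordProd (i :: ω) = cs.simple i * cs.wordProd ω := cs.wordProd_cons i ω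
    have hlen : cs.length (cs.wordProd ω) < cs.length (cs.simple i * cs.wordProd ω) := by
      have h1 : cs.length (cs.wordProd ω) = ω.length := hred'
      have h2 : cs.length (cs.simple i * cs.wordProd ω) = ω.length + 1 := by
        rw [← hπ]
        have := hred
        unfold CoxeterSystem.IsReduced at this
        rw [this, List.length_cons]
      omega
    rw [List.map_cons, List.prod_cons, Module.End.mul_apply, ih hred',
      Lop_single_inc cs q i _ hlen, hπ]

lemma prod_map_Lop_mem (ω : List B) : ((ω.map (Lop cs q)).prod) ∈ hAlg cs q := by
  induction ω with
  | nil => simpa using one_mem (hAlg cs q)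
  | cons i ω ih =>
    rw [List.map_cons, List.prod_cons]
    exact mul_mem (Algebra.subset_adjoin ⟨i, rfl⟩) ih

lemma prod_map_Rop_commute (hq : ∀ i j : B, IsConj (cs.simple i) (cs.simple j) → q i = q j)
    {a : Module.End ℂ (W →₀ ℂ)} (ha : a ∈ hAlg cs q) (l : List B) :
    Commute a ((l.map (Rop cs q)).prod) := by
  apply Commute.list_prod_right
  intro x hx
  rw [List.mem_map] at hx
  obtain ⟨j, _, rfl⟩ := hx
  exact commute_Rop cs q hq ha j

lemma eval_surj (x : W →₀ ℂ) :
    ∃ a ∈ hAlg cs q, a (Finsupp.single 1 1) = x := by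
  induction x using Finsupp.induction with
  | zero => exact ⟨0, zero_mem _, rfl⟩
  | single_add w c f _ _ ih =>
    obtain ⟨a, ha, hae⟩ := ih
    obtain ⟨ω, hred, hw⟩ := cs.exists_reduced_word' w
    refine ⟨c • ((ω.map (Lop cs q)).prod) + a, ?_, ?_⟩
    · exact add_mem (SMulMemClass.smul_mem c (prod_map_Lop_mem cs q ω)) ha
    · rw [LinearMap.add_apply, LinearMap.smul_apply, Lword cs q ω hred, hae, ← hw,
        Finsupp.smul_single, smul_eq_mul, mul_one]

lemma eval_inj (hq : ∀ i j : B, IsConj (cs.simple i) (cs.simple j) → q i = q j)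
    {a b : Module.End ℂ (W →₀ ℂ)} (ha : a ∈ hAlg cs q) (hb : b ∈ hAlg cs q)
    (h : a (Finsupp.single 1 1) = b (Finsupp.single 1 1)) : a = b := by
  apply single_ext
  intro w
  obtain ⟨ω, hred, hw⟩ := cs.exists_reduced_word' w
  have hR := Rword cs q ω hred
  rw [← hw] at hR
  rw [← hR]
  have hca := (prod_map_Rop_commute cs q hq ha ω.reverse).symm
  have hcb := (prod_map_Rop_commute cs q hq hb ω.reverse).symm
  calc a (((ω.reverse.map (Rop cs q)).prod) (Finsupp.single 1 1))
      = (a * (ω.reverse.map (Rop cs q)).prod) (Finsupp.single 1 1) := rfl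
    _ = ((ω.reverse.map (Rop cs q)).prod * a) (Finsupp.single 1 1) := by rw [hca]
    _ = ((ω.reverse.map (Rop cs q)).prod) (a (Finsupp.single 1 1)) := rfl
    _ = ((ω.reverse.map (Rop cs q)).prod) (b (Finsupp.single 1 1)) := by rw [h]
    _ = ((ω.reverse.map (Rop cs q)).prod * b) (Finsupp.single 1 1) := rfl
    _ = (b * (ω.reverse.map (Rop cs q)).prod) (Finsupp.single 1 1) := by rw [hcb]
    _ = b (((ω.reverse.map (Rop cs q)).prod) (Finsupp.single 1 1)) := rfl



lemma exists_heckeMul (hq : ∀ i j : B, IsConj (cs.simple i) (cs.simple j) → q i = q j) :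
    ∃ mul : (W →₀ ℂ) →ₗ[ℂ] (W →₀ ℂ) →ₗ[ℂ] (W →₀ ℂ), IsIwahoriHeckeMul cs q mul := by
  set inv : (W →₀ ℂ) → Module.End ℂ (W →₀ ℂ) :=
    fun x => (eval_surj cs q x).choose with hinvdef
  have hmem : ∀ x, inv x ∈ hAlg cs q := fun x => (eval_surj cs q x).choose_spec.1
  have heval : ∀ x, (inv x) (Finsupp.single 1 1) = x :=
    fun x => (eval_surj cs q x).choose_spec.2
  have huniq : ∀ (x : W →₀ ℂ) (b : Module.End ℂ (W →₀ ℂ)), b ∈ hAlg cs q →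
      b (Finsupp.single 1 1) = x → inv x = b := by
    intro x b hb hbe
    exact eval_inj cs q hq (hmem x) hb (by rw [heval, hbe])
  refine ⟨{ toFun := inv, map_add' := ?_, map_smul' := ?_ }, ?_, ?_, ?_, ?_, ?_⟩
  · intro x y
    refine (huniq (x + y) (inv x + inv y) (add_mem (hmem x) (hmem y)) ?_)
    rw [LinearMap.add_apply, heval, heval]
  · intro c x
    refine (huniq (c • x) (c • inv x) (SMulMemClass.smul_mem c (hmem x)) ?_)
    rw [LinearMap.smul_apply, heval]
  · -- associativity
    intro x y z
    show (inv ((inv x) y)) z = (inv x) ((inv y) z)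
    have : inv ((inv x) y) = inv x * inv y := by
      refine huniq _ _ (mul_mem (hmem x) (hmem y)) ?_
      rw [Module.End.mul_apply, heval]
    rw [this]
    rfl
  · -- left unit
    intro x
    show (inv (Finsupp.single 1 1)) x = x
    have : inv (Finsupp.single 1 1) = 1 := by
      refine huniq _ 1 (one_mem _) ?_
      rfl
    rw [this]
    rfl
  · -- right unit
    intro x
    exact heval x
  · -- increasing relation
    intro i w h
    show (inv (Finsupp.single (cs.simple i) 1)) (Finsupp.single w 1) = _
    have hLs : inv (Finsupp.single (cs.simple i) 1) = Lop cs q i := by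
      refine huniq _ _ (Algebra.subset_adjoin ⟨i, rfl⟩) ?_
      have h1 : cs.length (1 : W) < cs.length (cs.simple i * 1) := by
        rw [mul_one, cs.length_simple, cs.length_one]
        omega
      rw [Lop_single_inc cs q i 1 h1, mul_one]
    rw [hLs, Lop_single_inc cs q i w h]
  · -- decreasing relation
    intro i w h
    show (inv (Finsupp.single (cs.simple i) 1)) (Finsupp.single w 1) = _
    have hLs : inv (Finsupp.single (cs.simple i) 1) = Lop cs q i := by
      refine huniq _ _ (Algebra.subset_adjoin ⟨i, rfl⟩) ?_
      have h1 : cs.length (1 : W) < cs.length (cs.simple i * 1) := by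
        rw [mul_one, cs.length_simple, cs.length_one]
        omega
      rw [Lop_single_inc cs q i 1 h1, mul_one]
    have hne : ¬ cs.length w < cs.length (cs.simple i * w) := by omega
    rw [hLs, Lop_single_dec cs q i w hne]

variable {mul : (W →₀ ℂ) →ₗ[ℂ] (W →₀ ℂ) →ₗ[ℂ] (W →₀ ℂ)}

lemma agree_Ts {mul' : (W →₀ ℂ) →ₗ[ℂ] (W →₀ ℂ) →ₗ[ℂ] (W →₀ ℂ)}
    (h : IsIwahoriHeckeMul cs q mul) (h' : IsIwahoriHeckeMul cs q mul') (i : B) :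
    mul (Finsupp.single (cs.simple i) 1) = mul' (Finsupp.single (cs.simple i) 1) := by
  apply single_ext
  intro u
  rcases Nat.lt_trichotomy (cs.length u) (cs.length (cs.simple i * u)) with hlt | heq | hgt
  · rw [h.2.2.2.1 i u hlt, h'.2.2.2.1 i u hlt]
  · exact absurd heq.symm (cs.length_simple_mul_ne u i)
  · rw [h.2.2.2.2 i u hgt, h'.2.2.2.2 i u hgt]

lemma heckeMul_unique {mul' : (W →₀ ℂ) →ₗ[ℂ] (W →₀ ℂ) →ₗ[ℂ] (W →₀ ℂ)}
    (h : IsIwahoriHeckeMul cs q mul) (h' : IsIwahoriHeckeMul cs q mul') : mul = mul' := by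
  have main : ∀ n (w : W), cs.length w = n →
      mul (Finsupp.single w 1) = mul' (Finsupp.single w 1) := by
    intro n
    induction n using Nat.strong_induction_on with
    | _ n ih =>
      intro w hn
      rcases eq_or_ne w 1 with rfl | hw
      · apply LinearMap.ext
        intro x
        rw [h.2.1 x, h'.2.1 x]
      · obtain ⟨i, hi⟩ := cs.exists_leftDescent_of_ne_one hw
        have hi' : cs.length (cs.simple i * w) < cs.length w := hi
        have hlen : cs.length (cs.simple i * w) + 1 = cs.length w := by
          rcases cs.length_simple_mul w i with hd | hd
          · omega
          · exact hd
        set w' := cs.simple i * w with hw'def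
        have huw : cs.simple i * w' = w := by rw [hw'def, cs.simple_mul_simple_cancel_left]
        have hcond : cs.length w' < cs.length (cs.simple i * w') := by rw [huw]; omega
        have hrel : mul (Finsupp.single (cs.simple i) 1) (Finsupp.single w' 1)
            = Finsupp.single w 1 := by
          have := h.2.2.2.1 i w' hcond
          rwa [huw] at this
        have hrel' : mul' (Finsupp.single (cs.simple i) 1) (Finsupp.single w' 1)
            = Finsupp.single w 1 := by
          have := h'.2.2.2.1 i w' hcond
          rwa [huw] at this
        have hIH : mul (Finsupp.single w' 1) = mul' (Finsupp.single w' 1) :=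
          ih (cs.length w') (by omega) w' rfl
        apply LinearMap.ext
        intro x
        calc mul (Finsupp.single w 1) x
            = mul (mul (Finsupp.single (cs.simple i) 1) (Finsupp.single w' 1)) x := by
              rw [hrel]
          _ = mul (Finsupp.single (cs.simple i) 1) (mul (Finsupp.single w' 1) x) :=
              h.1 _ _ _
          _ = mul' (Finsupp.single (cs.simple i) 1) (mul' (Finsupp.single w' 1) x) := by
              rw [hIH, agree_Ts cs q h h' i]
          _ = mul' (mul' (Finsupp.single (cs.simple i) 1) (Finsupp.single w' 1)) x :=
              (h'.1 _ _ _).symm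
          _ = mul' (Finsupp.single w 1) x := by rw [hrel']
  apply single_ext
  intro w
  exact main (cs.length w) w rfl

lemma mul_single_simple (h : IsIwahoriHeckeMul cs q mul) :
    ∀ (u : W) (i : B), cs.length u < cs.length (u * cs.simple i) →
      mul (Finsupp.single u 1) (Finsupp.single (cs.simple i) 1)
        = Finsupp.single (u * cs.simple i) 1 := by
  have main : ∀ n (u : W), cs.length u = n → ∀ i : B,
      cs.length u < cs.length (u * cs.simple i) →
      mul (Finsupp.single u 1) (Finsupp.single (cs.simple i) 1)
        = Finsupp.single (u * cs.simple i) 1 := by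
    intro n
    induction n using Nat.strong_induction_on with
    | _ n ih =>
      intro u hn i hlt
      rcases eq_or_ne u 1 with rfl | hu
      · rw [h.2.1, one_mul]
      · obtain ⟨k, hk⟩ := cs.exists_leftDescent_of_ne_one hu
        have hk' : cs.length (cs.simple k * u) < cs.length u := hk
        have hlenu' : cs.length (cs.simple k * u) + 1 = cs.length u := by
          rcases cs.length_simple_mul u k with hd | hd
          · omega
          · exact hd
        set u' := cs.simple k * u with hu'def
        have huu : cs.simple k * u' = u := by rw [hu'def, cs.simple_mul_simple_cancel_left]
        have hx : cs.simple k * (u' * cs.simple i) = u * cs.simple i := by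
          rw [← mul_assoc, huu]
        have husi : cs.length (u * cs.simple i) = cs.length u + 1 := by
          rcases cs.length_mul_simple u i with hd | hd
          · exact hd
          · omega
        have hui : cs.length (u' * cs.simple i) = cs.length u' + 1 := by
          rcases cs.length_mul_simple u' i with hd | hd
          · exact hd
          · exfalso
            have hle : cs.length (cs.simple k * (u' * cs.simple i))
                ≤ 1 + cs.length (u' * cs.simple i) := by
              have := cs.length_mul_le (cs.simple k) (u' * cs.simple i)
              rwa [cs.length_simple] at this
            rw [hx] at hle
            omega
        have hcond1 : cs.length u' < cs.length (u' * cs.simple i) := by omega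
        have hrelk : mul (Finsupp.single (cs.simple k) 1) (Finsupp.single u' 1)
            = Finsupp.single u 1 := by
          have hcond : cs.length u' < cs.length (cs.simple k * u') := by rw [huu]; omega
          have := h.2.2.2.1 k u' hcond
          rwa [huu] at this
        have hrelk2 : mul (Finsupp.single (cs.simple k) 1)
            (Finsupp.single (u' * cs.simple i) 1)
            = Finsupp.single (u * cs.simple i) 1 := by
          have hcond : cs.length (u' * cs.simple i)
              < cs.length (cs.simple k * (u' * cs.simple i)) := by
            rw [hx]
            omega
          have := h.2.2.2.1 k (u' * cs.simple i) hcond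
          rwa [hx] at this
        calc mul (Finsupp.single u 1) (Finsupp.single (cs.simple i) 1)
            = mul (mul (Finsupp.single (cs.simple k) 1) (Finsupp.single u' 1))
                (Finsupp.single (cs.simple i) 1) := by rw [hrelk]
          _ = mul (Finsupp.single (cs.simple k) 1)
                (mul (Finsupp.single u' 1) (Finsupp.single (cs.simple i) 1)) := h.1 _ _ _
          _ = mul (Finsupp.single (cs.simple k) 1)
                (Finsupp.single (u' * cs.simple i) 1) := by
              rw [ih (cs.length u') (by omega) u' rfl i hcond1]
          _ = Finsupp.single (u * cs.simple i) 1 := hrelk2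
  exact fun u i hlt => main (cs.length u) u rfl i hlt

lemma conj_invariant (h : IsIwahoriHeckeMul cs q mul) (i j : B)
    (hconj : IsConj (cs.simple i) (cs.simple j)) : q i = q j := by
  obtain ⟨c, hc⟩ := isConj_iff.mp hconj
  have hc' : c * cs.simple i = cs.simple j * c := by
    rw [← hc]
    group
  have hex : ∃ n, ∃ w : W, cs.length w = n ∧ w * cs.simple i = cs.simple j * w :=
    ⟨cs.length c, c, rfl, hc'⟩
  obtain ⟨w, hwn, hsc⟩ := Nat.find_spec hex
  have hws : cs.length w < cs.length (w * cs.simple i) := by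
    rcases cs.length_mul_simple w i with hd | hd
    · omega
    · exfalso
      have hjwsi : cs.simple j * (w * cs.simple i) = w := by
        rw [← mul_assoc, ← hsc, mul_assoc, cs.simple_mul_simple_self, mul_one]
      have hcand : (w * cs.simple i) * cs.simple i = cs.simple j * (w * cs.simple i) := by
        rw [mul_assoc, cs.simple_mul_simple_self, mul_one, hjwsi]
      have hlt : cs.length (w * cs.simple i) < Nat.find hex := by omega
      exact Nat.find_min hex hlt ⟨w * cs.simple i, rfl, hcand⟩
  have hwsi : cs.length (w * cs.simple i) = cs.length w + 1 := by
    rcases cs.length_mul_simple w i with hd | hd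
    · exact hd
    · omega
  set Ti := (Finsupp.single (cs.simple i) 1 : W →₀ ℂ) with hTi
  set Tj := (Finsupp.single (cs.simple j) 1 : W →₀ ℂ) with hTj
  set Tw := (Finsupp.single w 1 : W →₀ ℂ) with hTw
  set Tws := (Finsupp.single (w * cs.simple i) 1 : W →₀ ℂ) with hTws
  have h1 : mul Tw Ti = Tws := mul_single_simple cs q h w i hws
  have h2 : mul Tj Tw = Tws := by
    have hcond : cs.length w < cs.length (cs.simple j * w) := by rw [← hsc]; omega
    have := h.2.2.2.1 j w hcond
    rw [← hsc] at this
    exact this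
  have hjw : cs.simple j * (w * cs.simple i) = w := by
    rw [← mul_assoc, ← hsc, mul_assoc, cs.simple_mul_simple_self, mul_one]
  have h3 : mul Tj Tws = (q j - 1) • Tws + q j • Tw := by
    have hcond : cs.length (cs.simple j * (w * cs.simple i)) < cs.length (w * cs.simple i) := by
      rw [hjw]; omega
    have := h.2.2.2.2 j (w * cs.simple i) hcond
    rw [hjw] at this
    exact this
  have hss : mul Ti Ti = (q i - 1) • Ti + q i • (Finsupp.single 1 1) := by
    have hcond : cs.length (cs.simple i * cs.simple i) < cs.length (cs.simple i) := by
      rw [cs.simple_mul_simple_self, cs.length_one, cs.length_simple]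
      omega
    have := h.2.2.2.2 i (cs.simple i) hcond
    rw [cs.simple_mul_simple_self] at this
    exact this
  have h4 : mul Tws Ti = (q i - 1) • Tws + q i • Tw := by
    calc mul Tws Ti = mul (mul Tw Ti) Ti := by rw [h1]
      _ = mul Tw (mul Ti Ti) := h.1 _ _ _
      _ = mul Tw ((q i - 1) • Ti + q i • (Finsupp.single 1 1)) := by rw [hss]
      _ = (q i - 1) • mul Tw Ti + q i • mul Tw (Finsupp.single 1 1) := by
          rw [map_add, map_smul, map_smul]
      _ = (q i - 1) • Tws + q i • Tw := by rw [h1, h.2.2.1]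
  have h5 : (q j - 1) • Tws + q j • Tw = (q i - 1) • Tws + q i • Tw := by
    calc (q j - 1) • Tws + q j • Tw = mul Tj Tws := h3.symm
      _ = mul Tj (mul Tw Ti) := by rw [h1]
      _ = mul (mul Tj Tw) Ti := (h.1 _ _ _).symm
      _ = mul Tws Ti := by rw [h2]
      _ = (q i - 1) • Tws + q i • Tw := h4
  have hne : w * cs.simple i ≠ w := by
    intro hcontra
    have := congrArg cs.length hcontra
    omega
  have heval := congrArg (fun f : W →₀ ℂ => f w) h5
  simp only [hTw, hTws, Finsupp.add_apply, Finsupp.smul_apply,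
    Finsupp.single_eq_of_ne' hne, Finsupp.single_eq_same, smul_zero, smul_eq_mul,
    mul_one, zero_add] at heval
  have hqq : q j = q i := by linear_combination heval
  exact hqq.symm

end
end HeckeStmt0

theorem stmt_0 {B W : Type*} [Group W] {M : CoxeterMatrix B} (cs : CoxeterSystem M W)
    (q : B → ℂ) :
    ((∃ mul : (W →₀ ℂ) →ₗ[ℂ] (W →₀ ℂ) →ₗ[ℂ] (W →₀ ℂ), IsIwahoriHeckeMul cs q mul) ↔
      (∀ i j : B, IsConj (cs.simple i) (cs.simple j) → q i = q j)) ∧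
    (∀ mul mul' : (W →₀ ℂ) →ₗ[ℂ] (W →₀ ℂ) →ₗ[ℂ] (W →₀ ℂ),
      IsIwahoriHeckeMul cs q mul → IsIwahoriHeckeMul cs q mul' → mul = mul') := by
  constructor
  · constructor
    · rintro ⟨mul, hmul⟩ i j hconj
      exact HeckeStmt0.conj_invariant cs q hmul i j hconj
    · intro hq
      exact HeckeStmt0.exists_heckeMul cs q hq
  · intro mul mul' h h'
    exact HeckeStmt0.heckeMul_unique cs q h h'
end

section
/- Let X be a finitely generated free abelian group, X∨ = Hom(X,ℤ) its dual, and let α ∈ X and α∨ ∈ X∨ satisfy ⟨α,α∨⟩ = 2. Define the reflection s_α : X → X by s_α(x) = x − ⟨x,α∨⟩α. Then a group homomorphism t : X → ℂˣ satisfies t ∘ s_α = t if and only if: t(α) = 1, in case α∨ ∉ 2X∨; and t(α) ∈ {1,−1}, in case α∨ ∈ 2X∨. -/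
/-!
Since `t` is a character, `t (x - n • α) = t x * (t α ^ n)⁻¹`, so `t` is `s_α`-invariant exactly
when `t α ^ n = 1` for every `n` in the image of `α∨`. That image is a subgroup of `ℤ` containing
`2`; it is `2ℤ` when `α∨ ∈ 2X∨` and `ℤ` otherwise (an everywhere-even `α∨` can be halved
pointwise), so the condition reads `t α ^ 2 = 1`, resp. `t α = 1`.
-/

lemma AddMonoidHom.exists_eq_add_self_of_forall_even {X : Type*} [AddZeroClass X] (f : X →+ ℤ)
    (hf : ∀ x, Even (f x)) : ∃ g : X →+ ℤ, f = g + g := by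
  refine ⟨{ toFun := fun x => f x / 2, map_zero' := by simp, map_add' := fun x y => ?_ }, ?_⟩
  · obtain ⟨a, ha⟩ := hf x
    obtain ⟨b, hb⟩ := hf y
    simp only [map_add, ha, hb]
    omega
  · ext x
    obtain ⟨a, ha⟩ := hf x
    simp only [AddMonoidHom.add_apply, AddMonoidHom.coe_mk, ZeroHom.coe_mk, ha]
    omega

lemma map_zsmul_of_map_add {X G : Type*} [AddGroup X] [Group G] {t : X → G}
    (ht : ∀ x y, t (x + y) = t x * t y) (n : ℤ) (x : X) : t (n • x) = t x ^ n :=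
  map_zpow (MonoidHom.mk' (fun a : Multiplicative X => t a.toAdd) fun _ _ => ht _ _)
    (Multiplicative.ofAdd x) n

lemma forall_map_sub_zsmul_eq_iff {X G : Type*} [AddGroup X] [Group G] {t : X → G}
    (ht : ∀ x y, t (x + y) = t x * t y) (α : X) (f : X → ℤ) :
    (∀ x, t (x - f x • α) = t x) ↔ ∀ x, t α ^ f x = 1 := by
  refine forall_congr' fun x => ?_
  have : t (x - f x • α) = t x * (t α ^ f x)⁻¹ := by
    rw [← map_zsmul_of_map_add ht, eq_mul_inv_iff_mul_eq, ← ht, sub_add_cancel]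
  rw [this, mul_eq_left, inv_eq_one]

lemma forall_zpow_eq_one_iff_of_odd {X G : Type*} [AddZeroClass X] [Group G] {f : X →+ ℤ}
    {α x : X} (hα : f α = 2) (hx : Odd (f x)) (z : G) : (∀ y, z ^ f y = 1) ↔ z = 1 := by
  refine ⟨fun h => ?_, fun h y => by rw [h, one_zpow]⟩
  obtain ⟨k, hk⟩ := hx
  have hsq : z ^ (2 : ℤ) = 1 := hα ▸ h α
  simpa only [hk, zpow_add, zpow_mul, hsq, one_zpow, one_mul, zpow_one] using h x

lemma forall_zpow_eq_one_iff_of_eq_add_self {X G : Type*} [AddZeroClass X] [Group G]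
    {f g : X →+ ℤ} {α : X} (hα : f α = 2) (hfg : f = g + g) (z : G) :
    (∀ y, z ^ f y = 1) ↔ z ^ 2 = 1 := by
  refine ⟨fun h => by simpa [hα] using h α, fun h y => ?_⟩
  rw [hfg, AddMonoidHom.add_apply, ← two_mul, zpow_mul, zpow_two, ← sq, h, one_zpow]

lemma Units.sq_eq_one_iff {R : Type*} [Ring R] [NoZeroDivisors R] (u : Rˣ) :
    u ^ 2 = 1 ↔ u = 1 ∨ u = -1 := by
  rw [sq, _root_.mul_eq_one_iff_inv_eq, Units.inv_eq_self_iff]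

theorem stmt_5_general {X : Type*} [AddCommGroup X]
    (α : X) (αv : X →+ ℤ) (hpair : αv α = 2)
    (t : X → ℂˣ) (ht : ∀ x y : X, t (x + y) = t x * t y) :
    ((¬ ∃ βv : X →+ ℤ, αv = βv + βv) →
      ((∀ x : X, t (x - αv x • α) = t x) ↔ t α = 1)) ∧
    ((∃ βv : X →+ ℤ, αv = βv + βv) →
      ((∀ x : X, t (x - αv x • α) = t x) ↔ (t α = 1 ∨ t α = -1))) := by
  rw [forall_map_sub_zsmul_eq_iff ht]
  constructor
  · intro hnot
    obtain ⟨x, hx⟩ : ∃ x, Odd (αv x) := by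
      by_contra! hall
      exact hnot (αv.exists_eq_add_self_of_forall_even fun x => Int.not_odd_iff_even.mp (hall x))
    exact forall_zpow_eq_one_iff_of_odd hpair hx (t α)
  · rintro ⟨βv, hβv⟩
    rw [forall_zpow_eq_one_iff_of_eq_add_self hpair hβv, Units.sq_eq_one_iff]

theorem stmt_5 {X : Type*} [AddCommGroup X] [Module.Free ℤ X] [Module.Finite ℤ X]
    (α : X) (αv : X →+ ℤ) (hpair : αv α = 2)
    (t : X → ℂˣ) (ht : ∀ x y : X, t (x + y) = t x * t y) :
    ((¬ ∃ βv : X →+ ℤ, αv = βv + βv) →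
      ((∀ x : X, t (x - αv x • α) = t x) ↔ t α = 1)) ∧
    ((∃ βv : X →+ ℤ, αv = βv + βv) →
      ((∀ x : X, t (x - αv x • α) = t x) ↔ (t α = 1 ∨ t α = -1))) :=
  stmt_5_general α αv hpair t ht
end

section
/- Let X be an abelian group, W a finite group acting on X by automorphisms, and let (π,V) be a module over ℂ[X ⋊ W]. Suppose t ∈ T = Hom(X,ℂˣ) is such that V is generated as a ℂ[X ⋊ W]-module by the weight space V_t = {v ∈ V : π(x)v = t(x)v for all x ∈ X}. Then the natural map ℂ[X ⋊ W] ⊗_{ℂ[X ⋊ W_t]} V_t → V is an isomorphism of ℂ[X ⋊ W]-modules. -/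
/- STATEMENT 6: Let `X` be an abelian group, `W` a finite group acting on `X` by
automorphisms, and `(π, V)` a module over `ℂ[X ⋊ W]`.  Suppose `t ∈ T = Hom(X, ℂˣ)` is
such that `V` is generated as a `ℂ[X ⋊ W]`-module by the weight space
`V_t = {v : x • v = t(x) v}`.  Then the natural map
`ℂ[X ⋊ W] ⊗_{ℂ[X ⋊ W_t]} V_t → V` is an isomorphism of `ℂ[X ⋊ W]`-modules.

Since `ℂ[X ⋊ W]` is free as a right module over the subalgebra `ℂ[X ⋊ W_t]`, with any
system of representatives of the left cosets of `H = X ⋊ W_t` in `G = X ⋊ W` as a basis,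
the natural map is an isomorphism if and only if, for every such system `Rset` of coset
representatives, the comparison map `(f : Rset → V_t) ↦ Σ_{r ∈ Rset} r • f(r)` (which is
the composition of the natural map with the corresponding ℂ-linear parametrisation of
`ℂ[X ⋊ W] ⊗_{ℂ[X ⋊ W_t]} V_t`) is bijective.  (The abelian group `X` is written
multiplicatively.) -/

/-- The stabilizer `W_t ≤ W` of the character `t : X →* ℂˣ` for the action
`(w · t)(x) = t(φ(w)⁻¹ x)`; as a set it equals `{w : t ∘ φ(w) = t}`. -/
def charStab {X W : Type*} [CommGroup X] [Group W] (φ : W →* MulAut X) (t : X →* ℂˣ) :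
    Subgroup W where
  carrier := {w | ∀ x : X, t (φ w x) = t x}
  one_mem' := fun x => by simp
  mul_mem' := by
    intro a b ha hb x
    have h : φ (a * b) x = φ a (φ b x) := by rw [map_mul]; rfl
    rw [h, ha, hb]
  inv_mem' := by
    intro a ha x
    have h1 : φ a ((φ a)⁻¹ x) = x := by simp
    have h2 := ha ((φ a)⁻¹ x)
    rw [h1] at h2
    rw [map_inv]
    exact h2.symm

/-- The `t`-weight space `V_t` of a `ℂ[X ⋊ W]`-module `V`. -/
def tWeight {X W : Type*} [CommGroup X] [Group W] (φ : W →* MulAut X)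
    {V : Type*} [AddCommGroup V] [Module (MonoidAlgebra ℂ (X ⋊[φ] W)) V]
    (t : X →* ℂˣ) : Set V :=
  {v | ∀ x : X,
    (MonoidAlgebra.single (SemidirectProduct.inl x : X ⋊[φ] W) (1 : ℂ)) • v
      = (MonoidAlgebra.single (1 : X ⋊[φ] W) ((t x : ℂ))) • v}

/-! For `u ∈ V_t` and `g ∈ X ⋊ W`, the vector `g • u` is a weight vector for the character
`g.right · t`, and two coset representatives give the same character exactly when they lie in
the same coset of `X ⋊ W_t`. Weight vectors for distinct characters are linearly independent,
which gives injectivity. For surjectivity, write `g = r h` with `r` a representative and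
`h ∈ X ⋊ W_t`: then `g • u = r • (h • u)` with `h • u ∈ V_t`, and such vectors span `V`. -/

open MonoidAlgebra Finset SemidirectProduct

section WeightSpace

variable (k : Type*) {G V X : Type*} [CommRing k] [Monoid G] [AddCommGroup V]
  [Module (MonoidAlgebra k G) V]

/-- `V` has no `k`-module structure of its own: scalars act through `single 1 c`. -/
def weightSpace (ι : X → G) (χ : X → k) : AddSubgroup V where
  carrier := {v | ∀ x, single (ι x) (1 : k) • v = single (1 : G) (χ x) • v}
  zero_mem' x := by rw [smul_zero, smul_zero]
  add_mem' hu hv x := by rw [smul_add, smul_add, hu x, hv x]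
  neg_mem' hv x := by rw [smul_neg, smul_neg, hv x]

variable {k}

lemma single_one_smul_comm (c : k) (g : G) (d : k) (v : V) :
    single (1 : G) c • single g d • v = single g d • single (1 : G) c • v := by
  rw [← mul_smul, ← mul_smul, single_mul_single, single_mul_single, one_mul, mul_one, mul_comm]

variable {ι : X → G} {χ : X → k} {v : V}

lemma single_one_smul_mem_weightSpace (c : k) (hv : v ∈ weightSpace k ι χ) :
    single (1 : G) c • v ∈ weightSpace k ι χ := fun x => by
  rw [← single_one_smul_comm c (ι x), hv x, single_one_smul_comm c 1]

lemma single_smul_sub_single_one_smul (hv : v ∈ weightSpace k ι χ) (y : X) (c : k) :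
    single (ι y) (1 : k) • v - single (1 : G) c • v = single (1 : G) (χ y - c) • v := by
  rw [hv y, ← sub_smul, single_sub]

end WeightSpace

section WeightSpaceIndependence

variable {k G V X : Type*} [Field k] [Monoid G] [AddCommGroup V] [Module (MonoidAlgebra k G) V]

lemma eq_zero_of_single_one_smul_eq_zero {c : k} (hc : c ≠ 0) {v : V}
    (h : single (1 : G) c • v = 0) : v = 0 :=
  (hc.isUnit.map (singleOneRingHom (R := k) (M := G))).smul_eq_zero.1 h

theorem eq_zero_of_sum_mem_weightSpace {ι : X → G} {I : Type*} {χ : I → X → k} {s : Finset I}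
    (hχ : Set.InjOn χ s) {v : I → V} (hv : ∀ i ∈ s, v i ∈ weightSpace k ι (χ i))
    (hsum : ∑ i ∈ s, v i = 0) : ∀ i ∈ s, v i = 0 := by
  classical
  induction s using Finset.induction_on generalizing v with
  | empty => simp
  | insert a s ha ih =>
    rw [sum_insert ha] at hsum
    have hv_a := hv a (mem_insert_self a s)
    -- applying `ι y - χ a y` kills `v a` and rescales each `v i` by `χ i y - χ a y`
    have hscaled : ∀ y, ∀ i ∈ s, single (1 : G) (χ i y - χ a y) • v i = 0 := by
      intro y
      refine ih (hχ.mono (subset_insert a s))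
        (fun i hi => single_one_smul_mem_weightSpace _ (hv i (mem_insert_of_mem hi))) ?_
      calc ∑ i ∈ s, single (1 : G) (χ i y - χ a y) • v i
          = ∑ i ∈ s, (single (ι y) (1 : k) • v i - single (1 : G) (χ a y) • v i) :=
            sum_congr rfl fun i hi =>
              (single_smul_sub_single_one_smul (hv i (mem_insert_of_mem hi)) y _).symm
        _ = -(single (ι y) (1 : k) • v a - single (1 : G) (χ a y) • v a) := by
            rw [sum_sub_distrib, ← smul_sum, ← smul_sum, eq_neg_of_add_eq_zero_right hsum,
              smul_neg, smul_neg, neg_sub_neg, neg_sub]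
        _ = 0 := by
            rw [single_smul_sub_single_one_smul hv_a, sub_self, single_zero, zero_smul, neg_zero]
    have hs : ∀ i ∈ s, v i = 0 := by
      intro i hi
      have hne : χ i ≠ χ a := fun h =>
        ha (hχ (mem_insert_of_mem hi) (mem_insert_self a s) h ▸ hi)
      obtain ⟨y, hy⟩ := Function.ne_iff.1 hne
      exact eq_zero_of_single_one_smul_eq_zero (sub_ne_zero.2 hy) (hscaled y i hi)
    rw [sum_eq_zero hs, add_zero] at hsum
    intro i hi
    rcases mem_insert.1 hi with rfl | hi
    exacts [hsum, hs i hi]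

end WeightSpaceIndependence

section CosetSum

variable (k : Type*) {G V : Type*} [CommSemiring k] [Group G] [AddCommMonoid V]
  [Module (MonoidAlgebra k G) V]

/-- For a system `R` of representatives of `G ⧸ H`, this is the natural map
`k[G] ⊗_{k[H]} U → V` written in the basis `R` of `k[G]` over `k[H]`. -/
noncomputable def cosetSum (R : Finset G) (U : AddSubmonoid V) : (R → U) →+ V where
  toFun f := ∑ r : R, single (r : G) (1 : k) • (f r : V)
  map_zero' := by simp
  map_add' f f' := by simp [smul_add, sum_add_distrib]

variable {k} {R : Finset G} {U : AddSubmonoid V}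

@[simp]
lemma cosetSum_apply (f : R → U) :
    cosetSum k R U f = ∑ r : R, single (r : G) (1 : k) • (f r : V) := rfl

variable {H : Subgroup G} (hH : ∀ h ∈ H, ∀ u ∈ U, single h (1 : k) • u ∈ U)
  (hcover : ∀ g : G, ∃ r ∈ R, r⁻¹ * g ∈ H)
include hH hcover

lemma single_smul_mem_mrange_cosetSum (g : G) {u : V} (hu : u ∈ U) :
    single g (1 : k) • u ∈ AddMonoidHom.mrange (cosetSum k R U) := by
  classical
  obtain ⟨r, hr, hrg⟩ := hcover g
  refine ⟨Pi.single ⟨r, hr⟩ ⟨single (r⁻¹ * g) (1 : k) • u, hH _ hrg u hu⟩, ?_⟩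
  rw [cosetSum_apply, Fintype.sum_eq_single ⟨r, hr⟩ fun r' hr' => by simp [hr']]
  simp [← mul_smul, single_mul_single]

theorem surjective_cosetSum (hk : ∀ c : k, ∀ u ∈ U, single (1 : G) c • u ∈ U)
    (hgen : Submodule.span (MonoidAlgebra k G) (U : Set V) = ⊤) :
    Function.Surjective (cosetSum k R U) := by
  have hsmul : ∀ a : MonoidAlgebra k G, ∀ u ∈ U,
      a • u ∈ AddMonoidHom.mrange (cosetSum k R U) := by
    intro a u hu
    induction a using MonoidAlgebra.induction_linear with
    | zero => rw [zero_smul]; exact zero_mem _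
    | add a b ha hb => rw [add_smul]; exact add_mem ha hb
    | single g c =>
      rw [← mul_one g, ← one_mul c, ← single_mul_single, mul_smul]
      exact single_smul_mem_mrange_cosetSum hH hcover g (hk c u hu)
  intro v
  obtain ⟨n, a, u, rfl⟩ := Submodule.mem_span_set'.1 (hgen ▸ Submodule.mem_top (x := v))
  exact sum_mem fun i _ => hsmul (a i) (u i) (u i).2

end CosetSum

theorem injective_cosetSum {k G V X : Type*} [Field k] [Group G] [AddCommGroup V]
    [Module (MonoidAlgebra k G) V] {ι : X → G} {R : Finset G} {U : AddSubgroup V}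
    (χ : G → X → k) (hχ : Set.InjOn χ R)
    (hU : ∀ r ∈ R, ∀ u ∈ U, single r (1 : k) • u ∈ weightSpace k ι (χ r)) :
    Function.Injective (cosetSum k R U.toAddSubmonoid) := by
  intro f f' h
  have hzero := eq_zero_of_sum_mem_weightSpace (s := univ) (χ := fun r : R => χ r)
    (v := fun r => single (r : G) (1 : k) • ((f r : V) - f' r))
    (fun r _ r' _ e => Subtype.ext (hχ r.2 r'.2 e))
    (fun r _ => hU r r.2 _ (sub_mem (f r).2 (f' r).2))
    (by simpa only [smul_sub, sum_sub_distrib, cosetSum_apply, sub_eq_zero] using h)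
  funext r
  refine Subtype.ext (sub_eq_zero.1 ?_)
  exact ((Group.isUnit (r : G)).map (of k G)).smul_eq_zero.1 (hzero r (mem_univ r))

section SemidirectProduct

variable {X W : Type*} [CommGroup X] [Group W] {φ : W →* MulAut X}

lemma inl_mul_eq_mul_inl (g : X ⋊[φ] W) (x : X) :
    (inl x : X ⋊[φ] W) * g = g * inl ((φ g.right)⁻¹ x) := by
  ext
  · simp [mul_comm]
  · simp

lemma single_smul_mem_weightSpace_inl {k V : Type*} [CommRing k] [AddCommGroup V]
    [Module (MonoidAlgebra k (X ⋊[φ] W)) V] {χ : X → k} {v : V}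
    (hv : v ∈ weightSpace k (inl : X → X ⋊[φ] W) χ) (g : X ⋊[φ] W) :
    single g (1 : k) • v ∈
      weightSpace k (inl : X → X ⋊[φ] W) (fun x => χ ((φ g.right)⁻¹ x)) := by
  intro x
  rw [← mul_smul, single_mul_single, one_mul, inl_mul_eq_mul_inl, ← one_mul (1 : k),
    ← single_mul_single, mul_smul, hv, single_one_smul_comm, mul_one]

/-- The character `w · t` of the paper. -/
def twistChar (φ : W →* MulAut X) (t : X →* ℂˣ) (w : W) : X → ℂ := fun x => t ((φ w)⁻¹ x)

lemma twistChar_eq_iff {t : X →* ℂˣ} {w w' : W} :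
    twistChar φ t w = twistChar φ t w' ↔ w⁻¹ * w' ∈ charStab φ t := by
  have hact : ∀ x, φ (w⁻¹ * w') x = (φ w)⁻¹ (φ w' x) := fun x => by simp
  simp only [twistChar, funext_iff, Units.val_inj]
  constructor
  · intro h x
    simpa [hact] using h (φ w' x)
  · intro h x
    simpa [hact] using h ((φ w')⁻¹ x)

lemma twistChar_one (t : X →* ℂˣ) : twistChar φ t 1 = fun x => (t x : ℂ) := by
  funext x
  simp [twistChar]

end SemidirectProduct

theorem stmt_6_general {X W V : Type*} [CommGroup X] [Group W] (φ : W →* MulAut X)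
    [AddCommGroup V] [Module (MonoidAlgebra ℂ (X ⋊[φ] W)) V] (t : X →* ℂˣ)
    (hgen : Submodule.span (MonoidAlgebra ℂ (X ⋊[φ] W)) (tWeight φ t (V := V)) = ⊤)
    (Rset : Finset (X ⋊[φ] W))
    (hcover : ∀ g : X ⋊[φ] W, ∃ r ∈ Rset,
      r⁻¹ * g ∈ (charStab φ t).comap (SemidirectProduct.rightHom (φ := φ)))
    (hsep : ∀ r ∈ Rset, ∀ r' ∈ Rset,
      r⁻¹ * r' ∈ (charStab φ t).comap (SemidirectProduct.rightHom (φ := φ)) → r = r') :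
    Function.Bijective (fun f : (Rset → tWeight φ t (V := V)) =>
      ∑ r : Rset, (MonoidAlgebra.single (r : X ⋊[φ] W) (1 : ℂ)) • (f r : V)) := by
  set U : AddSubgroup V := weightSpace ℂ (inl : X → X ⋊[φ] W) (fun x => (t x : ℂ))
  have htwist : ∀ g : X ⋊[φ] W, ∀ u ∈ U,
      single g (1 : ℂ) • u ∈ weightSpace ℂ (inl : X → X ⋊[φ] W) (twistChar φ t g.right) :=
    fun g _ hu => single_smul_mem_weightSpace_inl hu g
  have hstab : ∀ h ∈ (charStab φ t).comap (rightHom (φ := φ)), ∀ u ∈ U,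
      single h (1 : ℂ) • u ∈ U := by
    intro h hh u hu
    have : twistChar φ t h.right = twistChar φ t 1 := twistChar_eq_iff.2 (by simpa using hh)
    simpa only [this, twistChar_one] using htwist h u hu
  refine ⟨injective_cosetSum (U := U) (fun g => twistChar φ t g.right) ?_ fun r _ => htwist r,
    surjective_cosetSum (U := U.toAddSubmonoid) hstab hcover
      (fun c _ hu => single_one_smul_mem_weightSpace c hu) hgen⟩
  intro r hr r' hr' h
  exact hsep r hr r' hr' (by simpa using twistChar_eq_iff.1 h)

theorem stmt_6 {X W V : Type*} [CommGroup X] [Group W] [Finite W] (φ : W →* MulAut X)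
    [AddCommGroup V] [Module (MonoidAlgebra ℂ (X ⋊[φ] W)) V] (t : X →* ℂˣ)
    (hgen : Submodule.span (MonoidAlgebra ℂ (X ⋊[φ] W)) (tWeight φ t (V := V)) = ⊤)
    (Rset : Finset (X ⋊[φ] W))
    (hcover : ∀ g : X ⋊[φ] W, ∃ r ∈ Rset,
      r⁻¹ * g ∈ (charStab φ t).comap (SemidirectProduct.rightHom (φ := φ)))
    (hsep : ∀ r ∈ Rset, ∀ r' ∈ Rset,
      r⁻¹ * r' ∈ (charStab φ t).comap (SemidirectProduct.rightHom (φ := φ)) → r = r') :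
    Function.Bijective (fun f : (Rset → tWeight φ t (V := V)) =>
      ∑ r : Rset, (MonoidAlgebra.single (r : X ⋊[φ] W) (1 : ℂ)) • (f r : V)) :=
  stmt_6_general φ t hgen Rset hcover hsep
end

section
/- (Explicit form of part of Theorem 2.4(c)) With a, b ∈ ℂˣ satisfying a² ≠ −1, b² ≠ −1 and a²b² ≠ 1, and with A_t, B ∈ M₂(ℂ) as defined in the context: for t = ab, the line L ⊂ ℂ² spanned by the vector (−a², 1) is invariant under both A_{ab} and B; on L, B acts by the scalar −1 and A_{ab} acts by the scalar (ab)⁻¹ (the Steinberg representation), while on the quotient ℂ²/L, B acts by the scalar a² and A_{ab} acts by the scalar ab (the trivial representation). -/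
/- STATEMENT 13: Explicit form of part of Theorem 2.4(c) for the affine Hecke algebra of
type Ã₁.  For `t = ab`, the line `L` spanned by `(-a², 1)` is invariant under `A_{ab}` and
`B`; on `L`, `B` acts by `-1` and `A_{ab}` acts by `(ab)⁻¹` (the Steinberg representation),
while on the quotient `ℂ²/L`, `B` acts by `a²` and `A_{ab}` acts by `ab` (the trivial
representation). -/

open Matrix

/-- The matrix of the action of `θ₁` on `ind_{ℂ[X]}^{ℋ}(ℂ_t)` in the basis `(v, T_{s_α} v)`. -/
noncomputable def heckeThetaMat (a b t : ℂ) : Matrix (Fin 2) (Fin 2) ℂ :=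
  !![t, (a ^ 2 - 1) * t + a * (b - b⁻¹); 0, t⁻¹]

/-- The matrix of the action of `T_{s_α}` on `ind_{ℂ[X]}^{ℋ}(ℂ_t)` in the basis
`(v, T_{s_α} v)`. -/
noncomputable def heckeTMat (a : ℂ) : Matrix (Fin 2) (Fin 2) ℂ :=
  !![0, a ^ 2; 1, a ^ 2 - 1]

theorem stmt_13 (a b : ℂ) (ha : a ≠ 0) (hb : b ≠ 0)
    (ha2 : a ^ 2 ≠ -1) (hb2 : b ^ 2 ≠ -1) (hab : a ^ 2 * b ^ 2 ≠ 1) :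
    ∀ L : Submodule ℂ (Fin 2 → ℂ), L = Submodule.span ℂ {![-(a ^ 2), 1]} →
      ((∀ v ∈ L, (heckeThetaMat a b (a * b)).mulVec v ∈ L) ∧
       (∀ v ∈ L, (heckeTMat a).mulVec v ∈ L)) ∧
      (∀ v ∈ L, (heckeTMat a).mulVec v = (-1 : ℂ) • v) ∧
      (∀ v ∈ L, (heckeThetaMat a b (a * b)).mulVec v = (a * b)⁻¹ • v) ∧
      (∀ v : Fin 2 → ℂ, (heckeTMat a).mulVec v - a ^ 2 • v ∈ L) ∧
      (∀ v : Fin 2 → ℂ, (heckeThetaMat a b (a * b)).mulVec v - (a * b) • v ∈ L) := by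
  intro L hL
  set w : Fin 2 → ℂ := ![-(a ^ 2), 1] with hw
  have hBw : (heckeTMat a).mulVec w = (-1 : ℂ) • w := by
    funext i
    fin_cases i <;>
      simp [heckeTMat, hw, mulVec, dotProduct, Fin.sum_univ_two] <;> ring
  have hAw : (heckeThetaMat a b (a * b)).mulVec w = (a * b)⁻¹ • w := by
    funext i
    fin_cases i <;>
      simp [heckeThetaMat, hw, mulVec, dotProduct, Fin.sum_univ_two]
    field_simp
    ring
  have hTact : ∀ v ∈ L, (heckeTMat a).mulVec v = (-1 : ℂ) • v := by
    intro v hv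
    rw [hL, Submodule.mem_span_singleton] at hv
    obtain ⟨c, rfl⟩ := hv
    rw [mulVec_smul, hBw, smul_comm]
  have hAact : ∀ v ∈ L, (heckeThetaMat a b (a * b)).mulVec v = (a * b)⁻¹ • v := by
    intro v hv
    rw [hL, Submodule.mem_span_singleton] at hv
    obtain ⟨c, rfl⟩ := hv
    rw [mulVec_smul, hAw, smul_comm]
  have hwL : ∀ c : ℂ, c • w ∈ L := by
    intro c
    rw [hL]
    exact Submodule.smul_mem _ _ (Submodule.mem_span_singleton_self _)
  refine ⟨⟨fun v hv => ?_, fun v hv => ?_⟩, hTact, hAact, fun v => ?_, fun v => ?_⟩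
  · rw [hAact v hv]; exact L.smul_mem _ hv
  · rw [hTact v hv]; exact L.smul_mem _ hv
  · have : (heckeTMat a).mulVec v - a ^ 2 • v = (v 0 - v 1) • w := by
      funext i
      fin_cases i <;>
        simp [heckeTMat, hw, mulVec, dotProduct, Fin.sum_univ_two] <;> ring
    rw [this]; exact hwL _
  · have : (heckeThetaMat a b (a * b)).mulVec v - (a * b) • v
        = (((a * b)⁻¹ - a * b) * v 1) • w := by
      funext i
      fin_cases i <;>
        simp [heckeThetaMat, hw, mulVec, dotProduct, Fin.sum_univ_two] <;>
        field_simp <;> ring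
    rw [this]; exact hwL _
end

section
/- If (k₁,k₂) is generic, then for any two distinct partitions μ ≠ ν of n, the points λ(μ,k) and λ(ν,k) of ℝⁿ lie in distinct W(Bₙ)-orbits; equivalently, the multiset {|h(b)k₁ + k₂| : b a box of the Young diagram of μ} differs from the multiset {|h(b)k₁ + k₂| : b a box of the Young diagram of ν}. -/
/- STATEMENT 15: For the root system of type `Bₙ` in `ℝⁿ` with parameters `k₁` (long roots
`±e_i ± e_j`) and `k₂` (short roots `±e_i`), if `(k₁, k₂)` is generic, i.e.
`k₁k₂·∏_{j=1}^{2(n-1)} (jk₁ + 2k₂)(jk₁ - 2k₂) ≠ 0`, then for any two distinct partitions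
`μ ≠ ν` of `n` the points `λ(μ, k)` and `λ(ν, k)` of `ℝⁿ` lie in distinct `W(Bₙ)`-orbits,
where `W(Bₙ)` acts by permutations and sign changes of the coordinates and `λ(μ, k)` is a
vector whose coordinates are the numbers `h(b)·k₁ + k₂` over the boxes `b` of the Young
diagram of `μ` (the box in column `i`, row `j` having height `h(b) = j - i`). -/

/-- Genericity of the parameters `(k₁, k₂)` for `Bₙ`. -/
def BnGeneric (n : ℕ) (k₁ k₂ : ℝ) : Prop :=
  k₁ * k₂ * ∏ j ∈ Finset.Icc 1 (2 * (n - 1)),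
    (((j : ℝ) * k₁ + 2 * k₂) * ((j : ℝ) * k₁ - 2 * k₂)) ≠ 0

/-- `l` is the list of column lengths `μ₁ ≥ μ₂ ≥ … ≥ μ_d > 0` of a partition of `n`. -/
def IsPartitionOf (n : ℕ) (l : List ℕ) : Prop :=
  l.Pairwise (· ≥ ·) ∧ (∀ p ∈ l, 0 < p) ∧ l.sum = n

/-- The multiset of the numbers `h(b)·k₁ + k₂ = (j - i)·k₁ + k₂` over the boxes `b` of the
Young diagram whose `i`-th column has `l_i` boxes (indices starting from `0`). -/
def heightCoords (k₁ k₂ : ℝ) (l : List ℕ) : Multiset ℝ :=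
  ↑(l.zipIdx.flatMap fun p => (List.range p.1).map fun j => ((j : ℝ) - (p.2 : ℝ)) * k₁ + k₂)

/-- `x` is a vector `λ(μ, k) ∈ ℝⁿ` attached to the partition `μ = l`: its coordinates form
(in some order) the multiset of the numbers `h(b)·k₁ + k₂` over the boxes of the Young
diagram of `μ`. -/
def IsLambdaVec (n : ℕ) (k₁ k₂ : ℝ) (l : List ℕ) (x : Fin n → ℝ) : Prop :=
  (↑(List.ofFn x) : Multiset ℝ) = heightCoords k₁ k₂ l

/-! For integers with `|h|, |h'| < n`, `|h k₁ + k₂| = |h' k₁ + k₂|` forces either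
`(h - h') k₁ = 0` or `(h + h') k₁ + 2 k₂ = 0`; genericity excludes the second since
`|h + h'| ≤ 2(n - 1)`. Hence the `W(Bₙ)`-orbit of `λ(μ, k)` determines the multiset of box
heights of `μ`, and that multiset determines `μ`: the first column has `1 + max h` boxes, and
deleting it lowers every remaining height by one. -/

theorem Multiset.eq_of_map_eq_map_of_injOn {α β : Type*} {f : α → β} {S : Set α}
    (hf : S.InjOn f) {s t : Multiset α} (hs : ∀ a ∈ s, a ∈ S) (ht : ∀ a ∈ t, a ∈ S)
    (h : s.map f = t.map f) : s = t := by
  have lift : ∀ (u : Multiset α) (hu : ∀ a ∈ u, a ∈ S),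
      u = (u.pmap Subtype.mk hu).map Subtype.val := fun u hu => by
    rw [Multiset.map_pmap, Multiset.pmap_eq_map, Multiset.map_id']
  rw [lift s hs, lift t ht] at h ⊢
  rw [Multiset.map_map, Multiset.map_map] at h
  exact congrArg _ (Multiset.map_injective (Set.injOn_iff_injective.mp hf) h)

theorem Multiset.map_ofFn_eq_of_comp_perm {α β : Type*} {n : ℕ} (f : α → β) {x y : Fin n → α}
    (σ : Equiv.Perm (Fin n)) (h : ∀ i, f (y i) = f (x (σ i))) :
    (↑(List.ofFn y) : Multiset α).map f = (↑(List.ofFn x) : Multiset α).map f := by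
  simp only [Multiset.map_coe, List.map_ofFn, Multiset.coe_eq_coe]
  rw [show f ∘ y = (f ∘ x) ∘ σ from funext h]
  exact σ.ofFn_comp_perm _

def heights : List ℕ → Multiset ℤ
  | [] => 0
  | a :: l => (Multiset.range a).map (↑) + (heights l).map (· - 1)

theorem heightCoords_cons (k₁ k₂ : ℝ) (a : ℕ) (l : List ℕ) :
    heightCoords k₁ k₂ (a :: l) =
      (Multiset.range a).map (fun j : ℕ => (j : ℝ) * k₁ + k₂) + heightCoords k₁ (k₂ - k₁) l := by
  simp only [heightCoords, List.zipIdx_cons', List.flatMap_cons, List.flatMap_map,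
    Multiset.range, Multiset.map_coe, Multiset.coe_add, bind_pure_comp, List.map_eq_map,
    List.map_map]
  congr 2
  · simp
  · refine congrArg (List.flatMap · _) (funext fun p => List.map_congr_left fun j _ => ?_)
    simp only [Function.comp_apply, Prod.map_snd, Nat.cast_add, Nat.cast_one]
    ring

theorem heightCoords_eq_map_heights (k₁ k₂ : ℝ) (l : List ℕ) :
    heightCoords k₁ k₂ l = (heights l).map fun h : ℤ => (h : ℝ) * k₁ + k₂ := by
  induction l generalizing k₂ with
  | nil => rfl
  | cons a l ih =>
    rw [heightCoords_cons, ih, heights, Multiset.map_add, Multiset.map_map, Multiset.map_map]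
    congr 1
    refine Multiset.map_congr rfl fun h _ => ?_
    simp only [Function.comp_apply, Int.cast_sub, Int.cast_one]
    ring

theorem mem_heights_cons {a : ℕ} {l : List ℕ} {h : ℤ} :
    h ∈ heights (a :: l) ↔ (0 ≤ h ∧ h < a) ∨ h + 1 ∈ heights l := by
  simp only [heights, Multiset.mem_add, Multiset.mem_map, Multiset.mem_range]
  constructor
  · rintro (⟨j, hj, rfl⟩ | ⟨h', hh', rfl⟩)
    · omega
    · simpa using Or.inr hh'
  · rintro (⟨h0, ha⟩ | hh)
    · exact Or.inl ⟨h.toNat, by omega, by omega⟩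
    · exact Or.inr ⟨h + 1, hh, by ring⟩

theorem lt_of_mem_heights {a : ℕ} {l : List ℕ} (hl : ∀ p ∈ l, p ≤ a) {h : ℤ}
    (hh : h ∈ heights l) : h < a := by
  induction l generalizing h with
  | nil => simp [heights] at hh
  | cons b l ih =>
    rcases mem_heights_cons.mp hh with ⟨-, hb⟩ | hh
    · exact hb.trans_le (by exact_mod_cast hl b List.mem_cons_self)
    · linarith [ih (fun p hp => hl p (List.mem_cons_of_mem _ hp)) hh]

theorem neg_lt_length_of_mem_heights {l : List ℕ} {h : ℤ} (hh : h ∈ heights l) :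
    -h < l.length := by
  induction l generalizing h with
  | nil => simp [heights] at hh
  | cons b l ih =>
    rw [List.length_cons, Nat.cast_succ]
    rcases mem_heights_cons.mp hh with ⟨h0, -⟩ | hh
    · omega
    · linarith [ih hh]

theorem natAbs_lt_of_mem_heights {n : ℕ} {l : List ℕ} (hl : IsPartitionOf n l) {h : ℤ}
    (hh : h ∈ heights l) : h.natAbs < n := by
  obtain ⟨-, hpos, rfl⟩ := hl
  have hupper := lt_of_mem_heights (fun p hp => List.le_sum_of_mem hp) hh
  have hlower := neg_lt_length_of_mem_heights hh
  have hlen := List.length_le_sum_of_one_le l hpos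
  omega

theorem sub_one_mem_heights_cons {a : ℕ} (ha : 0 < a) (l : List ℕ) :
    (a : ℤ) - 1 ∈ heights (a :: l) :=
  mem_heights_cons.mpr (Or.inl ⟨by omega, by omega⟩)

theorem lt_of_mem_heights_cons {a : ℕ} {l : List ℕ} (hs : (a :: l).Pairwise (· ≥ ·)) {h : ℤ}
    (hh : h ∈ heights (a :: l)) : h < a :=
  lt_of_mem_heights
    (List.forall_mem_cons.mpr ⟨le_rfl, fun _ hp => List.rel_of_pairwise_cons hs hp⟩) hh

theorem eq_of_heights_eq {μ ν : List ℕ} (hμs : μ.Pairwise (· ≥ ·)) (hνs : ν.Pairwise (· ≥ ·))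
    (hμp : ∀ p ∈ μ, 0 < p) (hνp : ∀ p ∈ ν, 0 < p) (h : heights μ = heights ν) : μ = ν := by
  induction μ generalizing ν with
  | nil =>
    cases ν with
    | nil => rfl
    | cons b ν =>
      have hb := h ▸ sub_one_mem_heights_cons (hνp b List.mem_cons_self) ν
      simp [heights] at hb
  | cons a μ ih =>
    cases ν with
    | nil =>
      have ha := h ▸ sub_one_mem_heights_cons (hμp a List.mem_cons_self) μ
      simp [heights] at ha
    | cons b ν =>
      have hab : a = b := by
        have hab := lt_of_mem_heights_cons hνs
          (h ▸ sub_one_mem_heights_cons (hμp a List.mem_cons_self) μ)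
        have hba := lt_of_mem_heights_cons hμs
          (h ▸ sub_one_mem_heights_cons (hνp b List.mem_cons_self) ν)
        omega
      subst hab
      rw [heights, heights] at h
      rw [ih hμs.of_cons hνs.of_cons (fun p hp => hμp p (List.mem_cons_of_mem _ hp))
        (fun p hp => hνp p (List.mem_cons_of_mem _ hp))
        (Multiset.map_injective sub_left_injective (add_left_cancel h))]

namespace BnGeneric

variable {n : ℕ} {k₁ k₂ : ℝ}

theorem intCast_mul_add_ne_zero (hgen : BnGeneric n k₁ k₂) {m : ℤ}
    (hm : m.natAbs ≤ 2 * (n - 1)) : (m : ℝ) * k₁ + 2 * k₂ ≠ 0 := by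
  obtain ⟨hk, hprod⟩ := mul_ne_zero_iff.mp hgen
  rcases eq_or_ne m 0 with rfl | hm₀
  · simpa using (mul_ne_zero_iff.mp hk).2
  have hfactor := Finset.prod_ne_zero_iff.mp hprod m.natAbs
    (Finset.mem_Icc.mpr ⟨Int.natAbs_pos.mpr hm₀, hm⟩)
  -- the factor at `j = |m|` only depends on `j ^ 2 = m ^ 2`
  have hsq : ((m.natAbs : ℝ) * k₁ + 2 * k₂) * ((m.natAbs : ℝ) * k₁ - 2 * k₂) =
      ((m : ℝ) * k₁ + 2 * k₂) * ((m : ℝ) * k₁ - 2 * k₂) := by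
    rw [Nat.cast_natAbs, Int.cast_abs]
    linear_combination k₁ ^ 2 * sq_abs (m : ℝ)
  rw [hsq] at hfactor
  exact left_ne_zero_of_mul hfactor

theorem injOn_abs (hgen : BnGeneric n k₁ k₂) :
    Set.InjOn (fun h : ℤ => |(h : ℝ) * k₁ + k₂|) {h | h.natAbs < n} := by
  intro h hh h' hh' heq
  have hk₁ : k₁ ≠ 0 := left_ne_zero_of_mul (left_ne_zero_of_mul hgen)
  rcases abs_eq_abs.mp heq with heq | heq
  · exact_mod_cast mul_right_cancel₀ hk₁ (by linarith : (h : ℝ) * k₁ = h' * k₁)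
  · refine absurd ?_ (hgen.intCast_mul_add_ne_zero (m := h + h') ?_)
    · push_cast; linarith
    · simp only [Set.mem_ofPred_eq] at hh hh'; omega

end BnGeneric

theorem stmt_15_general (n : ℕ) (k₁ k₂ : ℝ) (hgen : BnGeneric n k₁ k₂)
    (μ ν : List ℕ) (hμ : IsPartitionOf n μ) (hν : IsPartitionOf n ν) (hμν : μ ≠ ν)
    (x y : Fin n → ℝ) (hx : IsLambdaVec n k₁ k₂ μ x) (hy : IsLambdaVec n k₁ k₂ ν y) :
    ¬ ∃ (σ : Equiv.Perm (Fin n)) (ε : Fin n → ℝ),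
        (∀ i, ε i = 1 ∨ ε i = -1) ∧ (∀ i, y i = ε i * x (σ i)) := by
  rintro ⟨σ, ε, hε, hyx⟩
  have habs : (↑(List.ofFn y) : Multiset ℝ).map abs = (↑(List.ofFn x) : Multiset ℝ).map abs :=
    Multiset.map_ofFn_eq_of_comp_perm abs σ fun i => by
      rcases hε i with h | h <;> simp [hyx i, h]
  rw [hx, hy, heightCoords_eq_map_heights, heightCoords_eq_map_heights, Multiset.map_map,
    Multiset.map_map] at habs
  have hheights : heights ν = heights μ :=
    Multiset.eq_of_map_eq_map_of_injOn hgen.injOn_abs (fun _ => natAbs_lt_of_mem_heights hν)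
      (fun _ => natAbs_lt_of_mem_heights hμ) habs
  exact hμν (eq_of_heights_eq hμ.1 hν.1 hμ.2.1 hν.2.1 hheights.symm)

theorem stmt_15 (n : ℕ) (hn : 1 ≤ n) (k₁ k₂ : ℝ) (hgen : BnGeneric n k₁ k₂)
    (μ ν : List ℕ) (hμ : IsPartitionOf n μ) (hν : IsPartitionOf n ν) (hμν : μ ≠ ν)
    (x y : Fin n → ℝ) (hx : IsLambdaVec n k₁ k₂ μ x) (hy : IsLambdaVec n k₁ k₂ ν y) :
    ¬ ∃ (σ : Equiv.Perm (Fin n)) (ε : Fin n → ℝ),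
        (∀ i, ε i = 1 ∨ ε i = -1) ∧ (∀ i, y i = ε i * x (σ i)) :=
  stmt_15_general n k₁ k₂ hgen μ ν hμ hν hμν x y hx hy
end
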